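/- arXiv:math-ph/0610063 — 7 statements merged into one kernel-verified Lean document; each statement's English description precedes it below -/
import Mathlib

section
/- Let K and K' be J×J real matrices such that |K_{ij}| ≤ K'_{ij} for all 1 ≤ i,j ≤ J, and suppose the spectral radius of K' satisfies r(K') < 1. Then r(K) < 1 and det(I - K) ≥ det(I - K') > 0. -/
open Matrix Polynomial Filter
open scoped NNReal ENNReal

variable {J : ℕ}

lemma evalCharpoly (M : Matrix (Fin J) (Fin J) ℂ) (x : ℂ) :
    M.charpoly.eval x = (algebraMap ℂ (Matrix (Fin J) (Fin J) ℂ) x - M).det := by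
  rw [Matrix.charpoly, eval_det, matPolyEquiv_charmatrix]
  congr! 2
  simp [Matrix.algebraMap_eq_diagonal]

lemma mem_spectrum_iff_isRoot (M : Matrix (Fin J) (Fin J) ℂ) (μ : ℂ) :
    μ ∈ spectrum ℂ M ↔ M.charpoly.IsRoot μ := by
  rw [spectrum.mem_iff, Matrix.isUnit_iff_isUnit_det, isUnit_iff_ne_zero, not_ne_iff,
    IsRoot, evalCharpoly]

lemma det_aeval_eq (M : Matrix (Fin J) (Fin J) ℂ) (q : ℂ[X]) (hqm : q.Monic) :
    (aeval M q).det = (q.roots.map fun a => ((-1 : ℂ)) ^ J * M.charpoly.eval a).prod := by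
  have hqs : q.Splits := IsAlgClosed.splits q
  have hqfac : q = (q.roots.map fun a => X - C a).prod :=
    hqs.eq_prod_roots_of_monic hqm
  obtain ⟨l, hl⟩ : ∃ l : List ℂ, q.roots = (l : Multiset ℂ) :=
    ⟨q.roots.toList, (q.roots.coe_toList).symm⟩
  rw [hl] at hqfac ⊢
  simp only [Multiset.map_coe, Multiset.prod_coe] at hqfac ⊢
  calc (aeval M q).det = ((l.map fun a => X - C a).map (aeval M)).prod.det := by
        rw [← map_list_prod (aeval M : ℂ[X] →ₐ[ℂ] Matrix (Fin J) (Fin J) ℂ)]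
        exact congrArg _ (congrArg _ hqfac)
    _ = (((l.map fun a => X - C a).map (aeval M)).map Matrix.det).prod := by
        simpa using map_list_prod (Matrix.detMonoidHom) (List.map (⇑(aeval M)) (List.map (fun a => X - C a) l))
    _ = (l.map fun a => ((-1 : ℂ)) ^ J * M.charpoly.eval a).prod := by
        rw [List.map_map, List.map_map]
        refine congrArg _ (List.map_congr_left fun a _ => ?_)
        show ((aeval M) (X - C a)).det = _
        rw [map_sub, aeval_X, aeval_C, ← neg_sub, Matrix.det_neg, evalCharpoly]
        simp

lemma charpoly_roots_card (M : Matrix (Fin J) (Fin J) ℂ) : M.charpoly.roots.card = J := by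
  rw [(splits_iff_card_roots).mp (IsAlgClosed.splits M.charpoly),
    Matrix.charpoly_natDegree_eq_dim, Fintype.card_fin]

lemma eval_eq_prod_roots (M : Matrix (Fin J) (Fin J) ℂ) (a : ℂ) :
    M.charpoly.eval a = (M.charpoly.roots.map fun l => a - l).prod := by
  conv_lhs => rw [(IsAlgClosed.splits M.charpoly).eq_prod_roots_of_monic M.charpoly_monic]
  rw [eval_multiset_prod, Multiset.map_map]
  congr 1
  refine Multiset.map_congr rfl fun l _ => ?_
  simp

lemma roots_charpoly_pow (M : Matrix (Fin J) (Fin J) ℂ) (n : ℕ) (hn : 0 < n) :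
    (M ^ n).charpoly.roots = M.charpoly.roots.map (· ^ n) := by
  have key : (M ^ n).charpoly = ((M.charpoly.roots.map (· ^ n)).map fun a => X - C a).prod := by
    apply Polynomial.funext
    intro x
    rw [eval_multiset_prod, Multiset.map_map, evalCharpoly]
    set r : ℂ[X] := X ^ n - C x with hr
    have hrm : r.Monic := monic_X_pow_sub_C x hn.ne'
    have hrcard : r.roots.card = n := by
      rw [(splits_iff_card_roots).mp (IsAlgClosed.splits r), natDegree_X_pow_sub_C]
    have h1 : algebraMap ℂ (Matrix (Fin J) (Fin J) ℂ) x - M ^ n = -(aeval M r) := by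
      rw [hr, map_sub, map_pow, aeval_X, aeval_C, neg_sub]
    rw [h1, Matrix.det_neg, det_aeval_eq M r hrm]
    -- now: (-1)^J * ∏_{a ∈ r.roots} ((-1)^J * p.eval a) = ∏_{λ ∈ p.roots} (x - λ^n)
    have h2 : (r.roots.map fun a => ((-1 : ℂ)) ^ J * M.charpoly.eval a).prod
        = ((-1 : ℂ)) ^ (J * n) * (r.roots.map fun a => M.charpoly.eval a).prod := by
      rw [Multiset.prod_map_mul, Multiset.map_const', Multiset.prod_replicate, hrcard,
        ← pow_mul]
    rw [h2]
    -- swap the double product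
    have h3 : (r.roots.map fun a => M.charpoly.eval a).prod
        = (M.charpoly.roots.map fun l => (r.roots.map fun a => a - l).prod).prod := by
      rw [show (fun a => M.charpoly.eval a) = fun a => (M.charpoly.roots.map fun l => a - l).prod
        from funext fun a => eval_eq_prod_roots M a]
      exact Multiset.prod_map_prod_map r.roots M.charpoly.roots
    rw [h3]
    -- inner product: ∏_{a ∈ r.roots} (a - l) = (-1)^n * (l^n - x)
    have h4 : ∀ l : ℂ, (r.roots.map fun a => a - l).prod = ((-1 : ℂ)) ^ n * (l ^ n - x) := by
      intro l
      have : r.eval l = (r.roots.map fun a => l - a).prod := by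
        conv_lhs => rw [(IsAlgClosed.splits r).eq_prod_roots_of_monic hrm]
        rw [eval_multiset_prod, Multiset.map_map]
        congr 1
        exact Multiset.map_congr rfl fun a _ => by simp
      have hre : r.eval l = l ^ n - x := by simp [hr]
      calc (r.roots.map fun a => a - l).prod
          = (r.roots.map fun a => -(l - a)).prod := by
            refine congrArg _ (Multiset.map_congr rfl fun a _ => by ring)
        _ = ((-1 : ℂ)) ^ n * (r.roots.map fun a => l - a).prod := by
            rw [show (fun a : ℂ => -(l - a)) = (Neg.neg ∘ fun a => l - a) from rfl,
              ← Multiset.map_map, Multiset.prod_map_neg, Multiset.card_map, hrcard]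
        _ = ((-1 : ℂ)) ^ n * (l ^ n - x) := by rw [← this, hre]
    have h5 : (M.charpoly.roots.map fun l => (r.roots.map fun a => a - l).prod).prod
        = ((-1 : ℂ)) ^ (J * n) * (M.charpoly.roots.map fun l => l ^ n - x).prod := by
      rw [show (fun l => (r.roots.map fun a => a - l).prod)
          = fun l : ℂ => ((-1 : ℂ)) ^ n * (l ^ n - x) from funext h4]
      rw [Multiset.prod_map_mul, Multiset.map_const', Multiset.prod_replicate,
        charpoly_roots_card, ← pow_mul, Nat.mul_comm n J]
    rw [h5]
    have h6 : (M.charpoly.roots.map fun l => l ^ n - x).prod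
        = ((-1 : ℂ)) ^ J * (M.charpoly.roots.map fun l => x - l ^ n).prod := by
      rw [show (fun l : ℂ => l ^ n - x) = fun l : ℂ => -(x - l ^ n) from funext fun l => by ring,
        show (fun l : ℂ => -(x - l ^ n)) = (Neg.neg ∘ fun l : ℂ => x - l ^ n) from rfl,
        ← Multiset.map_map, Multiset.prod_map_neg, Multiset.card_map, charpoly_roots_card]
    rw [h6, Multiset.map_map, Fintype.card_fin]
    have hfn : ((eval x ∘ fun a => X - C a) ∘ fun l : ℂ => l ^ n) = fun l : ℂ => x - l ^ n := by
      funext l; simp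
    rw [hfn]
    generalize (Multiset.map (fun l : ℂ => x - l ^ n) M.charpoly.roots).prod = P
    have hone : ((-1 : ℂ)) ^ J * ((-1 : ℂ)) ^ (J * n) * ((-1 : ℂ)) ^ (J * n) * ((-1 : ℂ)) ^ J
        = 1 := by
      rw [← pow_add, ← pow_add, ← pow_add]
      exact (neg_one_pow_eq_one_iff_even (by norm_num : (-1 : ℂ) ≠ 1)).2 ⟨J + J * n, by ring⟩
    calc ((-1 : ℂ)) ^ J * (((-1 : ℂ)) ^ (J * n) * (((-1 : ℂ)) ^ (J * n) * (((-1 : ℂ)) ^ J * P)))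
        = ((-1 : ℂ)) ^ J * ((-1 : ℂ)) ^ (J * n) * ((-1 : ℂ)) ^ (J * n) * ((-1 : ℂ)) ^ J * P := by
          ring
      _ = P := by rw [hone, one_mul]
  rw [key, roots_multiset_prod_X_sub_C]

lemma pow_entry_nonneg {K' : Matrix (Fin J) (Fin J) ℝ} (h : ∀ i j, 0 ≤ K' i j) :
    ∀ n i j, 0 ≤ (K' ^ n) i j := by
  intro n
  induction n with
  | zero =>
    intro i j
    rw [pow_zero]
    rcases eq_or_ne i j with rfl | hij
    · simp
    · simp [Matrix.one_apply_ne hij]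
  | succ n ih =>
    intro i j
    rw [pow_succ, Matrix.mul_apply]
    exact Finset.sum_nonneg fun k _ => mul_nonneg (ih i k) (h k j)

lemma pow_entry_abs_le {K K' : Matrix (Fin J) (Fin J) ℝ} (hdom : ∀ i j, |K i j| ≤ K' i j) :
    ∀ n i j, |(K ^ n) i j| ≤ (K' ^ n) i j := by
  have h0 : ∀ i j, 0 ≤ K' i j := fun i j => (abs_nonneg _).trans (hdom i j)
  intro n
  induction n with
  | zero =>
    intro i j
    rw [pow_zero, pow_zero]
    rcases eq_or_ne i j with rfl | hij
    · simp
    · simp [Matrix.one_apply_ne hij]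
  | succ n ih =>
    intro i j
    rw [pow_succ, pow_succ, Matrix.mul_apply, Matrix.mul_apply]
    refine (Finset.abs_sum_le_sum_abs _ _).trans (Finset.sum_le_sum fun k _ => ?_)
    rw [abs_mul]
    exact mul_le_mul (ih i k) (hdom k j) (abs_nonneg _) (pow_entry_nonneg h0 n i k)

lemma trace_pow_le {K K' : Matrix (Fin J) (Fin J) ℝ} (hdom : ∀ i j, |K i j| ≤ K' i j) (n : ℕ) :
    (K ^ n).trace ≤ (K' ^ n).trace :=
  Finset.sum_le_sum fun i _ => (le_abs_self _).trans (pow_entry_abs_le hdom n i i)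

lemma map_ofReal_pow (K : Matrix (Fin J) (Fin J) ℝ) (n : ℕ) :
    (K.map (Complex.ofReal)) ^ n = (K ^ n).map (Complex.ofReal) := by
  induction n with
  | zero => simp
  | succ n ih =>
    rw [pow_succ, pow_succ, ih]
    exact (Matrix.map_mul (f := Complex.ofRealHom)).symm

section NormStuff

attribute [local instance] Matrix.linftyOpNormedAddCommGroup Matrix.linftyOpNormedRing
  Matrix.linftyOpNormedAlgebra

lemma row_sum_le (M : Matrix (Fin J) (Fin J) ℂ) (i : Fin J) :
    ∑ j, ‖M i j‖ ≤ ‖M‖ := by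
  rw [Matrix.linfty_opNorm_def]
  have h1 : (∑ j, ‖M i j‖₊ : ℝ≥0) ≤ (Finset.univ.sup fun i => ∑ j, ‖M i j‖₊ : ℝ≥0) :=
    Finset.le_sup (f := fun i => ∑ j, ‖M i j‖₊) (Finset.mem_univ i)
  calc ∑ j, ‖M i j‖ = ((∑ j, ‖M i j‖₊ : ℝ≥0) : ℝ) := by
        push_cast
        rfl
    _ ≤ _ := by exact_mod_cast h1

lemma gelfand_decay (M : Matrix (Fin J) (Fin J) ℂ) (hfin : (spectrum ℂ M).Finite)
    (h : ∀ μ ∈ spectrum ℂ M, ‖μ‖ < 1) :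
    ∃ t : ℝ, 0 ≤ t ∧ t < 1 ∧ ∀ᶠ n : ℕ in atTop, ‖M ^ n‖ ≤ t ^ n := by
  have hρ : spectralRadius ℂ M < 1 := by
    rcases Set.eq_empty_or_nonempty (spectrum ℂ M) with he | hne
    · rw [spectralRadius, he]
      simp
    · obtain ⟨μ0, hμ0, hmax⟩ := Set.exists_max_image _ (fun μ => ‖μ‖₊) hfin hne
      have hle : spectralRadius ℂ M ≤ (‖μ0‖₊ : ℝ≥0∞) :=
        iSup₂_le fun μ hμ => by exact_mod_cast hmax μ hμ
      refine hle.trans_lt ?_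
      rw [← ENNReal.coe_one, ENNReal.coe_lt_coe, ← NNReal.coe_lt_coe]
      simpa using h μ0 hμ0
  obtain ⟨c, hc1, hc2⟩ := exists_between hρ
  lift c to ℝ≥0 using (hc2.trans_le le_top).ne
  have hgel := spectrum.pow_nnnorm_pow_one_div_tendsto_nhds_spectralRadius M
  have hev : ∀ᶠ n : ℕ in atTop, ((‖M ^ n‖₊ : ℝ≥0∞) ^ (1 / (n : ℝ))) < c :=
    hgel.eventually_lt_const hc1
  refine ⟨c, c.coe_nonneg, by exact_mod_cast hc2, ?_⟩
  filter_upwards [hev, eventually_ge_atTop 1] with n hn hn1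
  have hxn : (‖M ^ n‖₊ : ℝ≥0∞) ≤ (c : ℝ≥0∞) ^ n := by
    have h2 : ((‖M ^ n‖₊ : ℝ≥0∞) ^ (1 / (n : ℝ))) ^ (n : ℝ) ≤ (c : ℝ≥0∞) ^ (n : ℝ) :=
      ENNReal.rpow_le_rpow hn.le (by positivity)
    rw [← ENNReal.rpow_mul, one_div,
      inv_mul_cancel₀ (by exact_mod_cast Nat.one_le_iff_ne_zero.mp hn1 : (n : ℝ) ≠ 0),
      ENNReal.rpow_one] at h2
    rwa [← ENNReal.rpow_natCast]
  have : ‖M ^ n‖₊ ≤ c ^ n := by exact_mod_cast hxn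
  calc ‖M ^ n‖ = ((‖M ^ n‖₊ : ℝ≥0) : ℝ) := rfl
    _ ≤ ((c ^ n : ℝ≥0) : ℝ) := by exact_mod_cast this
    _ = (c : ℝ) ^ n := by push_cast; rfl

end NormStuff

section EigBound

attribute [local instance] Matrix.linftyOpNormedAddCommGroup Matrix.linftyOpNormedRing
  Matrix.linftyOpNormedAlgebra

lemma spectrum_finite (M : Matrix (Fin J) (Fin J) ℂ) : (spectrum ℂ M).Finite := by
  refine Set.Finite.subset (Polynomial.finite_setOf_isRoot M.charpoly_monic.ne_zero) ?_
  intro μ hμ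
  exact (mem_spectrum_iff_isRoot M μ).mp hμ

lemma eig_abs_le {K K' : Matrix (Fin J) (Fin J) ℝ} (hdom : ∀ i j, |K i j| ≤ K' i j)
    (h' : ∀ μ ∈ spectrum ℂ (K'.map Complex.ofReal), ‖μ‖ < 1) :
    ∃ t : ℝ, 0 ≤ t ∧ t < 1 ∧
      ∀ μ ∈ spectrum ℂ (K.map Complex.ofReal), ‖μ‖ ≤ t := by
  obtain ⟨t, ht0, ht1, hev⟩ := gelfand_decay (K'.map Complex.ofReal)
    (spectrum_finite _) h'
  refine ⟨t, ht0, ht1, fun μ hμ => ?_⟩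
  have hdet : (algebraMap ℂ (Matrix (Fin J) (Fin J) ℂ) μ - K.map Complex.ofReal).det = 0 := by
    have := (mem_spectrum_iff_isRoot (K.map Complex.ofReal) μ).mp hμ
    rwa [Polynomial.IsRoot, evalCharpoly] at this
  obtain ⟨v, hv0, hv⟩ := (Matrix.exists_mulVec_eq_zero_iff).mpr hdet
  have heig : (K.map Complex.ofReal).mulVec v = μ • v := by
    have h1 := hv
    rw [Matrix.sub_mulVec, sub_eq_zero] at h1
    rw [← h1, Algebra.algebraMap_eq_smul_one, Matrix.smul_mulVec, Matrix.one_mulVec]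
  have hpow : ∀ n : ℕ, ((K.map Complex.ofReal) ^ n).mulVec v = μ ^ n • v := by
    intro n
    induction n with
    | zero => simp [Matrix.one_mulVec]
    | succ n ih =>
      rw [pow_succ, ← Matrix.mulVec_mulVec, heig, Matrix.mulVec_smul, ih, smul_smul,
        ← pow_succ']
  obtain ⟨i0, hi0⟩ : ∃ i, v i ≠ 0 := Function.ne_iff.mp hv0
  set c : ℝ := ‖v i0‖ with hc
  have hcpos : 0 < c := by simpa [hc] using (norm_pos_iff.mpr hi0)
  set W : ℝ := ∑ j, ‖v j‖ with hW
  have hW0 : 0 ≤ W := Finset.sum_nonneg fun j _ => norm_nonneg _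
  have hkey : ∀ n : ℕ, ‖μ‖ ^ n * c ≤ ‖(K'.map Complex.ofReal) ^ n‖ * W := by
    intro n
    have h1 : ‖μ‖ ^ n * c
        = ‖(((K.map Complex.ofReal) ^ n).mulVec v) i0‖ := by
      rw [hpow n]
      simp [Pi.smul_apply, smul_eq_mul, _root_.map_mul, map_pow, hc]
    rw [h1, Matrix.mulVec, dotProduct]
    calc ‖∑ j, ((K.map Complex.ofReal) ^ n) i0 j * v j‖
        ≤ ∑ j, ‖((K.map Complex.ofReal) ^ n) i0 j * v j‖ :=
          norm_sum_le _ _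
      _ = ∑ j, ‖((K.map Complex.ofReal) ^ n) i0 j‖ * ‖v j‖ := by
          simp [_root_.map_mul]
      _ ≤ ∑ j, ‖(K'.map Complex.ofReal) ^ n‖ * ‖v j‖ := by
          refine Finset.sum_le_sum fun j _ =>
            mul_le_mul_of_nonneg_right ?_ (norm_nonneg _)
          rw [map_ofReal_pow]
          simp only [Matrix.map_apply, Complex.norm_real, Real.norm_eq_abs]
          refine le_trans (pow_entry_abs_le hdom n i0 j) ?_
          have hnn : (K' ^ n) i0 j = ‖((K' ^ n).map Complex.ofReal) i0 j‖ := by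
            simp [Matrix.map_apply, Complex.norm_real, Real.norm_eq_abs,
              abs_of_nonneg (pow_entry_nonneg (fun i j => (abs_nonneg _).trans (hdom i j)) n i0 j)]
          rw [hnn, ← map_ofReal_pow]
          refine le_trans ?_ (row_sum_le _ i0)
          exact Finset.single_le_sum
            (f := fun j => ‖((K'.map Complex.ofReal) ^ n) i0 j‖)
            (fun j _ => norm_nonneg _) (Finset.mem_univ j)
      _ = ‖(K'.map Complex.ofReal) ^ n‖ * W := by rw [← Finset.mul_sum]
  by_contra hcon
  push_neg at hcon
  have hq : 0 < ‖μ‖ := lt_of_le_of_lt ht0 hcon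
  have htend : Tendsto (fun n : ℕ => (t / ‖μ‖) ^ n * (W / c)) atTop (nhds 0) := by
    have h2 := tendsto_pow_atTop_nhds_zero_of_lt_one (div_nonneg ht0 hq.le)
      ((div_lt_one hq).mpr hcon)
    simpa using h2.mul_const (W / c)
  have hevsmall : ∀ᶠ n : ℕ in atTop, (t / ‖μ‖) ^ n * (W / c) < 1 :=
    htend.eventually_lt_const one_pos
  obtain ⟨n, hn1, hn2⟩ := (hevsmall.and hev).exists
  have h2 : ‖μ‖ ^ n * c ≤ t ^ n * W :=
    (hkey n).trans (mul_le_mul_of_nonneg_right hn2 hW0)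
  have h3 : (1 : ℝ) ≤ (t / ‖μ‖) ^ n * (W / c) := by
    rw [div_pow, div_mul_div_comm]
    exact (one_le_div (by positivity)).mpr h2
  linarith

end EigBound

lemma multiset_hasSum (s : Multiset ℂ) (f : ℂ → ℕ → ℂ) (g : ℂ → ℂ)
    (h : ∀ a ∈ s, HasSum (f a) (g a)) :
    HasSum (fun n => (s.map fun a => f a n).sum) ((s.map g).sum) := by
  induction s using Multiset.induction_on with
  | empty => simpa using hasSum_zero
  | cons a s ih =>
    have ha : HasSum (f a) (g a) := h a (Multiset.mem_cons_self a s)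
    have hs := ih fun b hb => h b (Multiset.mem_cons_of_mem hb)
    simpa [Multiset.map_cons, Multiset.sum_cons] using ha.add hs

lemma multiset_exp_sum (s : Multiset ℂ) :
    Complex.exp s.sum = (s.map Complex.exp).prod := by
  induction s using Multiset.induction_on with
  | empty => simp
  | cons a s ih => simp [Multiset.sum_cons, Complex.exp_add, ih]

lemma trace_map_ofReal (K : Matrix (Fin J) (Fin J) ℝ) :
    (K.map Complex.ofReal).trace = Complex.ofReal K.trace := by
  simp [Matrix.trace, Matrix.diag, Matrix.map_apply]

lemma det_exp (K : Matrix (Fin J) (Fin J) ℝ)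
    (hlt : ∀ μ ∈ spectrum ℂ (K.map Complex.ofReal), ‖μ‖ < 1) :
    ∃ S : ℝ, HasSum (fun n : ℕ => (K ^ n).trace / n) S ∧ (1 - K).det = Real.exp (-S) := by
  set A := K.map Complex.ofReal with hA
  set R := A.charpoly.roots with hRdef
  have hroots_lt : ∀ l ∈ R, ‖l‖ < 1 := fun l hl =>
    hlt l ((mem_spectrum_iff_isRoot A l).mpr (Polynomial.isRoot_of_mem_roots hl))
  set T : ℂ := (R.map fun l => -Complex.log (1 - l)).sum with hTdef
  have hhs : ∀ l ∈ R, HasSum (fun n : ℕ => l ^ n / n) (-Complex.log (1 - l)) := fun l hl =>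
    Complex.hasSum_taylorSeries_neg_log (by exact hroots_lt l hl)
  have hT : HasSum (fun n : ℕ => (R.map fun l : ℂ => l ^ n / (n : ℂ)).sum) T :=
    multiset_hasSum R _ _ hhs
  have hterm : ∀ n : ℕ, (R.map fun l : ℂ => l ^ n / (n : ℂ)).sum
      = Complex.ofReal ((K ^ n).trace / n) := by
    intro n
    rcases Nat.eq_zero_or_pos n with rfl | hn
    · simp
    · have h1 : (R.map fun l : ℂ => l ^ n / (n : ℂ)).sum = (R.map fun l : ℂ => l ^ n).sum / n := by
        simp only [div_eq_mul_inv]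
        rw [Multiset.sum_map_mul_right]
      rw [h1]
      have h2 : (R.map fun l : ℂ => l ^ n).sum = Complex.ofReal ((K ^ n).trace) := by
        have h3 : (R.map (· ^ n)) = (A ^ n).charpoly.roots := (roots_charpoly_pow A n hn).symm
        rw [show (fun l : ℂ => l ^ n) = (· ^ n) from rfl, h3,
          ← Matrix.trace_eq_sum_roots_charpoly, hA, map_ofReal_pow, trace_map_ofReal]
      rw [h2]
      push_cast
      ring
  have hT' : HasSum (fun n : ℕ => (Complex.ofReal ((K ^ n).trace / n))) T := by
    have h0 := hT
    simp only [hterm] at h0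
    exact h0
  have hre : HasSum (fun n : ℕ => (K ^ n).trace / n) T.re := by
    have h1 := RCLike.hasSum_re (𝕜 := ℂ) hT'
    simpa using h1
  have him : T.im = 0 := by
    have h1 := RCLike.hasSum_im (𝕜 := ℂ) hT'
    have h2 : HasSum (fun _ : ℕ => (0 : ℝ)) T.im := by simpa using h1
    simpa using h2.unique hasSum_zero
  have hTre : (T.re : ℂ) = T := Complex.ext (by simp) (by simp [him])
  refine ⟨T.re, hre, ?_⟩
  have h1ne : ∀ l ∈ R, (1 : ℂ) - l ≠ 0 := by
    intro l hl h0
    have hl1 : l = 1 := by linear_combination -h0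
    rw [hl1] at hl
    have := hroots_lt 1 hl
    simp at this
  have hdetC : Complex.ofReal ((1 - K).det) = (R.map fun l : ℂ => 1 - l).prod := by
    have hm : (1 - K).map Complex.ofReal = 1 - A := by
      ext i j
      rcases eq_or_ne i j with rfl | hij
      · simp [Matrix.map_apply, Matrix.sub_apply, Matrix.one_apply_eq, hA]
      · simp [Matrix.map_apply, Matrix.sub_apply, Matrix.one_apply_ne hij, hA]
    have hrd : Complex.ofReal ((1 - K).det) = ((1 - K).map Complex.ofReal).det :=
      RingHom.map_det Complex.ofRealHom (1 - K)
    rw [hrd, hm]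
    have h2 := evalCharpoly A 1
    rw [_root_.map_one] at h2
    rw [← h2, eval_eq_prod_roots]
  have hprod : (R.map fun l : ℂ => 1 - l).prod = Complex.exp (-T) := by
    have hneg : -T = (R.map fun l : ℂ => Complex.log (1 - l)).sum := by
      rw [hTdef, show (fun l : ℂ => -Complex.log (1 - l))
          = (Neg.neg ∘ fun l : ℂ => Complex.log (1 - l)) from rfl, ← Multiset.map_map,
        Multiset.sum_map_neg', neg_neg]
    rw [hneg, multiset_exp_sum, Multiset.map_map]
    refine congrArg Multiset.prod (Multiset.map_congr rfl fun l hl => ?_)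
    exact (Complex.exp_log (h1ne l hl)).symm
  have key : Complex.ofReal ((1 - K).det) = Complex.ofReal (Real.exp (-T.re)) := by
    rw [hdetC, hprod, Complex.ofReal_exp]
    congr 1
    rw [Complex.ofReal_neg, hTre]
  exact_mod_cast key

/-- Spectral radius of a real square matrix: the supremum of the moduli of the
elements of the (complex) spectrum of the matrix viewed over `ℂ`. -/
noncomputable def specRadR {J : ℕ} (K : Matrix (Fin J) (Fin J) ℝ) : ℝ :=
  sSup ((fun z : ℂ => ‖z‖) '' spectrum ℂ (K.map (Complex.ofReal)))

/-- If `|K i j| ≤ K' i j` for all `i, j` and `r(K') < 1`, then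
`r(K) < 1` and `det (I - K) ≥ det (I - K') > 0`. -/
theorem det_one_sub_ge_of_entrywise_dominated {J : ℕ}
    (K K' : Matrix (Fin J) (Fin J) ℝ)
    (hdom : ∀ i j, |K i j| ≤ K' i j)
    (hr : specRadR K' < 1) :
    specRadR K < 1 ∧ (1 - K).det ≥ (1 - K').det ∧ (1 - K').det > 0 := by
  unfold specRadR at hr ⊢
  have hfin' : (spectrum ℂ (K'.map Complex.ofReal)).Finite := spectrum_finite _
  have hbdd : BddAbove ((fun z : ℂ => ‖z‖) '' spectrum ℂ (K'.map Complex.ofReal)) :=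
    (hfin'.image _).bddAbove
  have h'lt : ∀ μ ∈ spectrum ℂ (K'.map Complex.ofReal), ‖μ‖ < 1 := fun μ hμ =>
    lt_of_le_of_lt (le_csSup hbdd (Set.mem_image_of_mem _ hμ)) hr
  obtain ⟨t, ht0, ht1, hKt⟩ := eig_abs_le hdom h'lt
  have hKlt : ∀ μ ∈ spectrum ℂ (K.map Complex.ofReal), ‖μ‖ < 1 := fun μ hμ =>
    lt_of_le_of_lt (hKt μ hμ) ht1
  have hrad : sSup ((fun z : ℂ => ‖z‖) '' spectrum ℂ (K.map Complex.ofReal)) < 1 := by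
    have h1 : sSup ((fun z : ℂ => ‖z‖) '' spectrum ℂ (K.map Complex.ofReal)) ≤ t :=
      Real.sSup_le (fun x hx => by obtain ⟨μ, hμ, rfl⟩ := hx; exact hKt μ hμ) ht0
    exact lt_of_le_of_lt h1 ht1
  obtain ⟨S, hS, hdet⟩ := det_exp K hKlt
  obtain ⟨S', hS', hdet'⟩ := det_exp K' h'lt
  have hSle : S ≤ S' := by
    refine hasSum_le (fun n => ?_) hS hS'
    rcases Nat.eq_zero_or_pos n with rfl | hn
    · simp
    · exact (div_le_div_iff_of_pos_right (by exact_mod_cast hn)).mpr (trace_pow_le hdom n)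
  refine ⟨hrad, ?_, ?_⟩
  · rw [hdet, hdet', ge_iff_le]
    exact Real.exp_le_exp.mpr (by linarith)
  · rw [hdet']
    exact Real.exp_pos _
end

section
/- For every odd integer q ≥ 3 and every x ∈ [0, π/2], the function W(x) = (2/π) ∫_0^x (sin(qs)/sin s) ds satisfies 0 ≤ W(x) ≤ √3/π + 2/3 < 1.218. -/
open Real

namespace GibbsAux

noncomputable def f (q : ℕ) : ℝ → ℝ := fun s => Real.sin (q * s) / Real.sin s

noncomputable def arch (q i : ℕ) : ℝ :=
  ∫ s in ((i : ℝ) * (π / q))..(((i : ℝ) + 1) * (π / q)), f q s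

noncomputable def c (q k : ℕ) : ℝ := ∫ s in (0 : ℝ)..((k : ℝ) * (π / q)), f q s

lemma abs_sin_nat_mul_le (n : ℕ) (x : ℝ) : |Real.sin (n * x)| ≤ n * |Real.sin x| := by
  induction n with
  | zero => simp
  | succ n ih =>
    have h1 : ((n : ℝ) + 1) * x = n * x + x := by ring
    push_cast
    rw [h1, Real.sin_add]
    have h2 := abs_add_le (Real.sin (n * x) * Real.cos x) (Real.cos (n * x) * Real.sin x)
    have h3 : |Real.sin (n * x) * Real.cos x| ≤ |Real.sin (n * x)| := by
      rw [abs_mul]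
      exact mul_le_of_le_one_right (abs_nonneg _) (Real.abs_cos_le_one x)
    have h4 : |Real.cos (n * x) * Real.sin x| ≤ |Real.sin x| := by
      rw [abs_mul]
      exact mul_le_of_le_one_left (abs_nonneg _) (Real.abs_cos_le_one _)
    linarith

lemma abs_f_le (q : ℕ) (s : ℝ) : |f q s| ≤ q := by
  rcases eq_or_ne (Real.sin s) 0 with h | h
  · simp [f, h]
  · rw [show f q s = Real.sin (q * s) / Real.sin s from rfl, abs_div,
      div_le_iff₀ (abs_pos.mpr h)]
    exact abs_sin_nat_mul_le q s

lemma f_intInt (q : ℕ) (a b : ℝ) : IntervalIntegrable (f q) MeasureTheory.volume a b := by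
  have hm : Measurable (f q) := by
    apply Measurable.div
    · exact Real.measurable_sin.comp (measurable_const.mul measurable_id)
    · exact Real.measurable_sin
  apply IntervalIntegrable.mono_fun' (g := fun _ => (q : ℝ)) intervalIntegrable_const
    hm.aestronglyMeasurable.restrict
  filter_upwards with s
  simpa using abs_f_le q s

lemma f_comp_intInt (q : ℕ) (d a b : ℝ) :
    IntervalIntegrable (fun s => f q (s + d)) MeasureTheory.volume a b := by
  have := (f_intInt q (a + d) (b + d)).comp_add_right d
  simpa using this

lemma sign_sin_arch (q k : ℕ) (hq0 : 0 < q) {s : ℝ}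
    (h1 : (k : ℝ) * (π / q) ≤ s) (h2 : s ≤ ((k : ℝ) + 1) * (π / q)) :
    0 ≤ (-1 : ℝ) ^ k * Real.sin (q * s) := by
  have hq0' : (0 : ℝ) < q := by exact_mod_cast hq0
  have key := Real.sin_add_int_mul_pi ((q : ℝ) * s - k * π) (k : ℤ)
  simp only [Int.cast_natCast, zpow_natCast] at key
  have e1 : (q : ℝ) * s = ((q : ℝ) * s - k * π) + (k : ℝ) * π := by ring
  rw [e1, key, ← mul_assoc]
  have hpow : ((-1 : ℝ) ^ k) * ((-1 : ℝ) ^ k) = 1 := by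
    rw [← pow_add]
    exact Even.neg_one_pow ⟨k, rfl⟩
  rw [hpow, one_mul]
  have h1' : (k : ℝ) * π ≤ (q : ℝ) * s := by
    have := mul_le_mul_of_nonneg_left h1 hq0'.le
    calc (k : ℝ) * π = (q : ℝ) * ((k : ℝ) * (π / q)) := by field_simp
      _ ≤ (q : ℝ) * s := this
  have h2' : (q : ℝ) * s ≤ ((k : ℝ) + 1) * π := by
    have := mul_le_mul_of_nonneg_left h2 hq0'.le
    calc (q : ℝ) * s ≤ (q : ℝ) * (((k : ℝ) + 1) * (π / q)) := this
      _ = ((k : ℝ) + 1) * π := by field_simp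
  apply Real.sin_nonneg_of_nonneg_of_le_pi <;> linarith

lemma sign_f_arch (q k : ℕ) (hq0 : 0 < q) (hk : k + 1 ≤ q) {s : ℝ}
    (h1 : (k : ℝ) * (π / q) ≤ s) (h2 : s ≤ ((k : ℝ) + 1) * (π / q)) :
    0 ≤ (-1 : ℝ) ^ k * f q s := by
  have hq0' : (0 : ℝ) < q := by exact_mod_cast hq0
  have hsq := sign_sin_arch q k hq0 h1 h2
  have hss : 0 ≤ Real.sin s := by
    apply Real.sin_nonneg_of_nonneg_of_le_pi
    · exact le_trans (by positivity) h1
    · have hcast : ((k : ℝ) + 1) ≤ q := by exact_mod_cast hk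
      calc s ≤ ((k : ℝ) + 1) * (π / q) := h2
        _ ≤ (q : ℝ) * (π / q) := by
            apply mul_le_mul_of_nonneg_right hcast (by positivity)
        _ = π := by field_simp
  show 0 ≤ (-1 : ℝ) ^ k * (Real.sin (q * s) / Real.sin s)
  rw [← mul_div_assoc]
  exact div_nonneg hsq hss

lemma tail_sign (q k : ℕ) (hq0 : 0 < q) (hk : k + 1 ≤ q) {a b : ℝ}
    (ha : (k : ℝ) * (π / q) ≤ a) (hab : a ≤ b) (hb : b ≤ ((k : ℝ) + 1) * (π / q)) :
    0 ≤ (-1 : ℝ) ^ k * ∫ s in a..b, f q s := by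
  rw [← intervalIntegral.integral_const_mul]
  apply intervalIntegral.integral_nonneg hab
  intro u hu
  exact sign_f_arch q k hq0 hk (le_trans ha hu.1) (le_trans hu.2 hb)

lemma arch_sign (q k : ℕ) (hq0 : 0 < q) (hk : k + 1 ≤ q) :
    0 ≤ (-1 : ℝ) ^ k * arch q k := by
  have hq0' : (0 : ℝ) < q := by exact_mod_cast hq0
  have hh : (0 : ℝ) < π / q := by positivity
  exact tail_sign q k hq0 hk le_rfl (by nlinarith) le_rfl

lemma pair_sign (q m k : ℕ) (hq : q = 2 * m + 1) (hk : k + 1 ≤ m) :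
    0 ≤ (-1 : ℝ) ^ k * (arch q k + arch q (k + 1)) := by
  have hq0 : 0 < q := by omega
  have hq0' : (0 : ℝ) < q := by exact_mod_cast hq0
  have hh : (0 : ℝ) < π / q := by positivity
  have hqr : (q : ℝ) = 2 * m + 1 := by exact_mod_cast hq
  have hqh : (2 * (m : ℝ) + 1) * (π / q) = π := by rw [← hqr]; field_simp
  have hk' : (k : ℝ) + 1 ≤ m := by exact_mod_cast hk
  unfold arch
  push_cast
  have e2 : (∫ s in (((k : ℝ) + 1) * (π / q))..(((k : ℝ) + 1 + 1) * (π / q)), f q s)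
      = ∫ s in ((k : ℝ) * (π / q))..(((k : ℝ) + 1) * (π / q)), f q (s + π / q) := by
    rw [intervalIntegral.integral_comp_add_right]
    congr 1 <;> ring
  rw [e2, ← intervalIntegral.integral_add (f_intInt q _ _) (f_comp_intInt q _ _ _),
    ← intervalIntegral.integral_const_mul]
  apply intervalIntegral.integral_nonneg (by nlinarith)
  intro s hs
  have hs1 : (k : ℝ) * (π / q) ≤ s := hs.1
  have hs2 : s ≤ ((k : ℝ) + 1) * (π / q) := hs.2
  have hfs : f q (s + π / q) = -Real.sin (q * s) / Real.sin (s + π / q) := by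
    show Real.sin ((q : ℝ) * (s + π / q)) / Real.sin (s + π / q) = _
    have e3 : (q : ℝ) * (s + π / q) = q * s + π := by field_simp
    rw [e3, Real.sin_add_pi]
  rcases eq_or_lt_of_le (le_trans (by positivity : (0 : ℝ) ≤ (k : ℝ) * (π / q)) hs1)
    with h0 | h0
  · rw [hfs, ← h0]
    show 0 ≤ (-1 : ℝ) ^ k * (Real.sin ((q : ℝ) * 0) / Real.sin 0 + _)
    simp
  · have hsmall : s + (π / q) / 2 ≤ π / 2 := by
      have hkm : ((k : ℝ) + 1) * (π / q) ≤ (m : ℝ) * (π / q) :=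
        mul_le_mul_of_nonneg_right hk' hh.le
      nlinarith
    have hsin_pos : 0 < Real.sin s := by
      apply Real.sin_pos_of_pos_of_lt_pi h0
      nlinarith [Real.pi_pos]
    have hmono : Real.sin s ≤ Real.sin (s + π / q) := by
      have hd := Real.sin_sub_sin (s + π / q) s
      have e4 : (s + π / q - s) / 2 = (π / q) / 2 := by ring
      have e5 : (s + π / q + s) / 2 = s + (π / q) / 2 := by ring
      rw [e4, e5] at hd
      have hcos : 0 ≤ Real.cos (s + (π / q) / 2) := by
        apply Real.cos_nonneg_of_mem_Icc
        constructor
        · have : (0 : ℝ) ≤ s + (π / q) / 2 := by positivity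
          linarith [Real.pi_pos]
        · exact hsmall
      have hsh : 0 ≤ Real.sin ((π / q) / 2) := by
        apply Real.sin_nonneg_of_nonneg_of_le_pi (by positivity)
        nlinarith [Real.pi_pos]
      nlinarith
    have hsign := sign_sin_arch q k hq0 hs1 hs2
    have key : (-1 : ℝ) ^ k * (f q s + f q (s + π / q))
        = ((-1 : ℝ) ^ k * Real.sin ((q : ℝ) * s)) *
          ((Real.sin s)⁻¹ - (Real.sin (s + π / q))⁻¹) := by
      rw [hfs]
      show (-1 : ℝ) ^ k * (Real.sin ((q : ℝ) * s) / Real.sin s + _) = _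
      rw [div_eq_mul_inv, div_eq_mul_inv]
      ring
    rw [key]
    apply mul_nonneg hsign
    rw [sub_nonneg]
    exact inv_anti₀ hsin_pos hmono

lemma c_step (q k : ℕ) : c q (k + 1) = c q k + arch q k := by
  unfold c arch
  push_cast
  exact (intervalIntegral.integral_add_adjacent_intervals (f_intInt q _ _)
    (f_intInt q _ _)).symm

lemma c_zero (q : ℕ) : c q 0 = 0 := by simp [c]

lemma c_one (q : ℕ) : c q 1 = arch q 0 := by
  unfold c arch
  norm_num

lemma c_bounds (q m : ℕ) (hq : q = 2 * m + 1) :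
    ∀ k, k ≤ m + 1 → 0 ≤ c q k ∧ c q k ≤ c q 1 := by
  have hq0 : 0 < q := by omega
  have ha0 : 0 ≤ arch q 0 := by
    have := arch_sign q 0 hq0 (by omega)
    simpa using this
  intro k
  induction k using Nat.strong_induction_on with
  | _ k ih =>
    match k with
    | 0 =>
      intro _
      rw [c_zero, c_one]
      exact ⟨le_rfl, ha0⟩
    | 1 => exact fun _ => ⟨by rw [c_one]; exact ha0, le_rfl⟩
    | (j + 2) =>
      intro hk2
      have hj1m : j + 1 ≤ m := by omega
      have E : c q (j + 2) = c q j + (arch q j + arch q (j + 1)) := by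
        rw [c_step q (j + 1), c_step q j]; ring
      have E' : c q (j + 2) = c q (j + 1) + arch q (j + 1) := c_step q (j + 1)
      have ihj := ih j (by omega) (by omega)
      have ihj1 := ih (j + 1) (by omega) (by omega)
      rcases Nat.even_or_odd j with he | ho
      · have hp := pair_sign q m j hq hj1m
        rw [he.neg_one_pow, one_mul] at hp
        have hodd : Odd (j + 1) := he.add_one
        have ha := arch_sign q (j + 1) hq0 (by omega)
        rw [hodd.neg_one_pow, neg_one_mul] at ha
        constructor
        · rw [E]; linarith [ihj.1]
        · rw [E']; linarith [ihj1.2, ha]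
      · have hp := pair_sign q m j hq hj1m
        rw [ho.neg_one_pow, neg_one_mul] at hp
        have heven : Even (j + 1) := ho.add_one
        have ha := arch_sign q (j + 1) hq0 (by omega)
        rw [heven.neg_one_pow, one_mul] at ha
        constructor
        · rw [E']; linarith [ihj1.1]
        · rw [E]; linarith [ihj.2, hp]

lemma arch_zero_le (q : ℕ) (hq3 : 3 ≤ q) : arch q 0 ≤ π / 3 + Real.sqrt 3 / 2 := by
  have hq3' : (3 : ℝ) ≤ q := by exact_mod_cast hq3
  have hq0' : (0 : ℝ) < q := by linarith
  have hh : (0 : ℝ) < π / q := by positivity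
  have harch : arch q 0 = ∫ s in (0 : ℝ)..(π / q), f q s := by
    unfold arch; norm_num
  have hgcont : Continuous fun s : ℝ => (q : ℝ) / 3 + (2 * q / 3) * Real.cos (2 * q * s / 3) := by
    apply continuous_const.add
    exact continuous_const.mul (Real.continuous_cos.comp (by continuity))
  have step1 : (∫ s in (0 : ℝ)..(π / q), f q s)
      ≤ ∫ s in (0 : ℝ)..(π / q), ((q : ℝ) / 3 + (2 * q / 3) * Real.cos (2 * q * s / 3)) := by
    apply intervalIntegral.integral_mono_on hh.le (f_intInt q _ _)
      (hgcont.intervalIntegrable _ _)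
    intro s hs
    rcases eq_or_lt_of_le hs.1 with h0 | h0
    · rw [← h0]
      show Real.sin ((q : ℝ) * 0) / Real.sin 0 ≤ _
      simp
      positivity
    · have hsu : s ≤ π / q := hs.2
      have hqsle : (q : ℝ) * s ≤ π := by
        have := (le_div_iff₀ hq0').mp hsu
        nlinarith
      set u := (q : ℝ) * s / 3 with hu
      have hupos : 0 < u := by positivity
      have huple : u ≤ π / 3 := by rw [hu]; linarith
      have hsinu : 0 < Real.sin u :=
        Real.sin_pos_of_pos_of_lt_pi hupos (by linarith [Real.pi_pos])
      have hconc : (3 / (q : ℝ)) * Real.sin u ≤ Real.sin s := by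
        have hcc := strictConcaveOn_sin_Icc.concaveOn
        have hx0 : (0 : ℝ) ∈ Set.Icc 0 π := ⟨le_rfl, Real.pi_pos.le⟩
        have hy : u ∈ Set.Icc (0 : ℝ) π := ⟨hupos.le, by linarith [Real.pi_pos]⟩
        have h1 : (0 : ℝ) ≤ 1 - 3 / q := by
          have : 3 / (q : ℝ) ≤ 1 := by rw [div_le_one hq0']; exact hq3'
          linarith
        have h2 : (0 : ℝ) ≤ 3 / (q : ℝ) := by positivity
        have hab : (1 - 3 / (q : ℝ)) + 3 / q = 1 := by ring
        have hkey := hcc.2 hx0 hy h1 h2 hab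
        have e0 : (1 - 3 / (q : ℝ)) • (0 : ℝ) + (3 / (q : ℝ)) • u = s := by
          simp only [smul_eq_mul, mul_zero, zero_add]
          rw [hu]
          field_simp
        rw [e0] at hkey
        simp only [smul_eq_mul, Real.sin_zero, mul_zero, zero_add] at hkey
        exact hkey
      have htrip : Real.sin ((q : ℝ) * s) = 3 * Real.sin u - 4 * Real.sin u ^ 3 := by
        have e1 : (q : ℝ) * s = 3 * u := by rw [hu]; ring
        rw [e1, Real.sin_three_mul]
      have hsin3 : 0 ≤ Real.sin ((q : ℝ) * s) :=
        Real.sin_nonneg_of_nonneg_of_le_pi (by positivity) hqsle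
      have hden : 0 < (3 / (q : ℝ)) * Real.sin u := by positivity
      have hfle : f q s ≤ Real.sin ((q : ℝ) * s) / ((3 / (q : ℝ)) * Real.sin u) := by
        show Real.sin ((q : ℝ) * s) / Real.sin s ≤ _
        exact div_le_div_of_nonneg_left hsin3 hden hconc
      have heq : Real.sin ((q : ℝ) * s) / ((3 / (q : ℝ)) * Real.sin u)
          = (q : ℝ) / 3 + (2 * q / 3) * Real.cos (2 * q * s / 3) := by
        have hc2 : Real.cos (2 * (q : ℝ) * s / 3) = 1 - 2 * Real.sin u ^ 2 := by
          have e2 : 2 * (q : ℝ) * s / 3 = 2 * u := by rw [hu]; ring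
          rw [e2, Real.cos_two_mul', Real.cos_sq']
          ring
        rw [htrip, hc2]
        field_simp
        ring
      calc f q s ≤ _ := hfle
        _ = _ := heq
  have step2 : (∫ s in (0 : ℝ)..(π / q),
        ((q : ℝ) / 3 + (2 * q / 3) * Real.cos (2 * q * s / 3)))
      = π / 3 + Real.sqrt 3 / 2 := by
    have hder : ∀ s ∈ Set.uIcc (0 : ℝ) (π / q),
        HasDerivAt (fun u => (q : ℝ) * u / 3 + Real.sin (2 * q * u / 3))
          ((q : ℝ) / 3 + (2 * q / 3) * Real.cos (2 * q * s / 3)) s := by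
      intro s _
      have hlin : HasDerivAt (fun u : ℝ => 2 * (q : ℝ) * u / 3) (2 * (q : ℝ) / 3) s := by
        have e : (fun u : ℝ => 2 * (q : ℝ) * u / 3) = fun u => (2 * (q : ℝ) / 3) * u :=
          funext fun u => by ring
        rw [e]
        simpa using (hasDerivAt_id s).const_mul (2 * (q : ℝ) / 3)
      have hsin : HasDerivAt (fun u : ℝ => Real.sin (2 * (q : ℝ) * u / 3))
          (Real.cos (2 * (q : ℝ) * s / 3) * (2 * (q : ℝ) / 3)) s :=
        (Real.hasDerivAt_sin _).comp s hlin
      have hq3d : HasDerivAt (fun u : ℝ => (q : ℝ) * u / 3) ((q : ℝ) / 3) s := by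
        have e : (fun u : ℝ => (q : ℝ) * u / 3) = fun u => ((q : ℝ) / 3) * u :=
          funext fun u => by ring
        rw [e]
        simpa using (hasDerivAt_id s).const_mul ((q : ℝ) / 3)
      have := hq3d.add hsin
      exact this.congr_deriv (by ring)
    rw [intervalIntegral.integral_eq_sub_of_hasDerivAt hder
      (hgcont.intervalIntegrable _ _)]
    have e1 : (q : ℝ) * (π / q) / 3 = π / 3 := by field_simp
    have hsin23 : Real.sin (2 * (q : ℝ) * (π / q) / 3) = Real.sqrt 3 / 2 := by
      have e2 : 2 * (q : ℝ) * (π / q) / 3 = π - π / 3 := by field_simp; ring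
      rw [e2, Real.sin_pi_sub, Real.sin_pi_div_three]
    simp only [e1, hsin23, mul_zero, zero_div, Real.sin_zero, add_zero, zero_add]
    norm_num
  rw [harch]
  calc (∫ s in (0 : ℝ)..(π / q), f q s) ≤ _ := step1
    _ = _ := step2

end GibbsAux

/-- For odd integer `q ≥ 3` and `x ∈ [0, π/2]`,
`W(x) = (2/π) ∫_0^x sin(qs)/sin(s) ds` satisfies `0 ≤ W(x) ≤ √3/π + 2/3 < 1.218`. -/
theorem gibbs_W_bounds (q : ℕ) (hq3 : 3 ≤ q) (hqodd : Odd q)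
    (x : ℝ) (hx0 : 0 ≤ x) (hx : x ≤ π / 2) :
    0 ≤ (2 / π) * ∫ s in (0:ℝ)..x, Real.sin (q * s) / Real.sin s ∧
    (2 / π) * (∫ s in (0:ℝ)..x, Real.sin (q * s) / Real.sin s) ≤
      Real.sqrt 3 / π + 2 / 3 ∧
    Real.sqrt 3 / π + 2 / 3 < 1.218 := by
  obtain ⟨m, hm⟩ := hqodd
  have hq0 : 0 < q := by omega
  have hq0' : (0 : ℝ) < q := by exact_mod_cast hq0
  have hh : (0 : ℝ) < π / q := by positivity
  have hπ := Real.pi_pos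
  have hqr : (q : ℝ) = 2 * m + 1 := by exact_mod_cast hm
  have hqh : (2 * (m : ℝ) + 1) * (π / q) = π := by rw [← hqr]; field_simp
  have hfeq : (∫ s in (0 : ℝ)..x, Real.sin (q * s) / Real.sin s)
      = ∫ s in (0 : ℝ)..x, GibbsAux.f q s := rfl
  set k : ℕ := ⌊x / (π / q)⌋₊ with hkdef
  have hk1 : (k : ℝ) * (π / q) ≤ x := by
    have h1 := Nat.floor_le (show 0 ≤ x / (π / q) by positivity)
    calc (k : ℝ) * (π / q) ≤ (x / (π / q)) * (π / q) :=
          mul_le_mul_of_nonneg_right h1 hh.le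
      _ = x := by field_simp
  have hk2 : x ≤ ((k : ℝ) + 1) * (π / q) := by
    have h1 := (Nat.lt_floor_add_one (x / (π / q))).le
    calc x = (x / (π / q)) * (π / q) := by field_simp
      _ ≤ ((k : ℝ) + 1) * (π / q) := mul_le_mul_of_nonneg_right h1 hh.le
  have hkm : k ≤ m := by
    by_contra hcon
    push_neg at hcon
    have hcon' : (m : ℝ) + 1 ≤ k := by exact_mod_cast hcon
    have hgt : π / 2 < ((m : ℝ) + 1) * (π / q) := by nlinarith
    have hle : ((m : ℝ) + 1) * (π / q) ≤ (k : ℝ) * (π / q) :=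
      mul_le_mul_of_nonneg_right hcon' hh.le
    linarith
  have hsplit : (∫ s in (0 : ℝ)..x, GibbsAux.f q s)
      = GibbsAux.c q k + ∫ s in ((k : ℝ) * (π / q))..x, GibbsAux.f q s := by
    rw [show GibbsAux.c q k = ∫ s in (0 : ℝ)..((k : ℝ) * (π / q)), GibbsAux.f q s from rfl]
    exact (intervalIntegral.integral_add_adjacent_intervals
      (GibbsAux.f_intInt q _ _) (GibbsAux.f_intInt q _ _)).symm
  have hcb := GibbsAux.c_bounds q m hm k (by omega)
  have hcb1 := GibbsAux.c_bounds q m hm (k + 1) (by omega)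
  have hstepk := GibbsAux.c_step q k
  have hkq : k + 1 ≤ q := by omega
  have ht1 := GibbsAux.tail_sign q k hq0 hkq le_rfl hk1 hk2
  have ht2 := GibbsAux.tail_sign q k hq0 hkq hk1 hk2 le_rfl
  have hsum : (∫ s in ((k : ℝ) * (π / q))..x, GibbsAux.f q s)
      + (∫ s in x..(((k : ℝ) + 1) * (π / q)), GibbsAux.f q s) = GibbsAux.arch q k :=
    intervalIntegral.integral_add_adjacent_intervals
      (GibbsAux.f_intInt q _ _) (GibbsAux.f_intInt q _ _)
  have hc1a : GibbsAux.c q 1 = GibbsAux.arch q 0 := GibbsAux.c_one q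
  have ha0le := GibbsAux.arch_zero_le q hq3
  have hF0 : 0 ≤ ∫ s in (0 : ℝ)..x, GibbsAux.f q s := by
    rcases Nat.even_or_odd k with he | ho
    · rw [he.neg_one_pow, one_mul] at ht1
      rw [hsplit]
      linarith [hcb.1]
    · rw [ho.neg_one_pow, neg_one_mul] at ht1 ht2
      rw [hsplit]
      linarith [hcb1.1, hstepk, ht2, hsum]
  have hFle : (∫ s in (0 : ℝ)..x, GibbsAux.f q s) ≤ π / 3 + Real.sqrt 3 / 2 := by
    rcases Nat.even_or_odd k with he | ho
    · rw [he.neg_one_pow, one_mul] at ht1 ht2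
      rw [hsplit]
      have h1 : GibbsAux.c q k + (∫ s in ((k : ℝ) * (π / q))..x, GibbsAux.f q s)
          ≤ GibbsAux.c q (k + 1) := by linarith [hstepk, ht2, hsum]
      linarith [hcb1.2, hc1a, ha0le, h1]
    · rw [ho.neg_one_pow, neg_one_mul] at ht1
      rw [hsplit]
      linarith [hcb.2, hc1a, ha0le, ht1]
  have hnum : Real.sqrt 3 / π + 2 / 3 < 1.218 := by
    have h3 : Real.sqrt 3 < 1.7320509 := by
      rw [show (1.7320509 : ℝ) = 1.7320509 from rfl] at *
      exact (Real.sqrt_lt' (by norm_num)).mpr (by norm_num)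
    have hp := Real.pi_gt_d6
    have hd : Real.sqrt 3 / π < 0.551332 := by
      rw [div_lt_iff₀ hπ]
      nlinarith
    norm_num at hd ⊢
    linarith
  refine ⟨?_, ?_, hnum⟩
  · rw [hfeq]
    exact mul_nonneg (by positivity) hF0
  · rw [hfeq]
    have h1 : (2 / π) * (∫ s in (0 : ℝ)..x, GibbsAux.f q s)
        ≤ (2 / π) * (π / 3 + Real.sqrt 3 / 2) :=
      mul_le_mul_of_nonneg_left hFle (by positivity)
    have h2 : (2 / π) * (π / 3 + Real.sqrt 3 / 2) = Real.sqrt 3 / π + 2 / 3 := by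
      field_simp
      ring
    linarith
end

section
/- For fixed t ∈ (0, π/2], the function q ↦ q·sin(t/q) is increasing in q for q ≥ 1. Consequently, for q ≥ 3, (2/π)∫_0^π sin(t)/(q sin(t/q)) dt ≤ (2/π)∫_0^π sin(t)/(3 sin(t/3)) dt = √3/π + 2/3. -/
open Real

lemma aux_concave {x c : ℝ} (hx0 : 0 ≤ x) (hxpi : x ≤ π) (hc0 : 0 ≤ c) (hc1 : c ≤ 1) :
    c * Real.sin x ≤ Real.sin (c * x) := by
  have h := strictConcaveOn_sin_Icc.concaveOn.2 (Set.mem_Icc.2 ⟨le_rfl, pi_pos.le⟩)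
    (Set.mem_Icc.2 ⟨hx0, hxpi⟩) (by linarith : (0:ℝ) ≤ 1 - c) hc0 (by ring)
  simpa [smul_eq_mul, Real.sin_zero] using h

lemma aux_integrable {q : ℝ} (hq : 3 ≤ q) :
    IntervalIntegrable (fun t => Real.sin t / (q * Real.sin (t / q))) MeasureTheory.volume 0 π := by
  have hq0 : (0:ℝ) < q := by linarith
  rw [intervalIntegrable_iff, Set.uIoc_of_le pi_pos.le]
  apply MeasureTheory.Measure.integrableOn_of_bounded (M := π / 2)
  · simp [Real.volume_Ioc]
  · apply Measurable.aestronglyMeasurable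
    exact (Real.measurable_sin.div ((measurable_id.div_const q).sin.const_mul q))
  · filter_upwards [MeasureTheory.ae_restrict_mem measurableSet_Ioc] with t ht
    obtain ⟨ht0, htpi⟩ := ht
    have htq0 : 0 < t / q := div_pos ht0 hq0
    have htq2 : t / q ≤ π / 2 := by
      rw [div_le_div_iff₀ hq0 two_pos]
      nlinarith [pi_pos]
    have hden : 2 / π * t ≤ q * Real.sin (t / q) := by
      have := Real.mul_le_sin htq0.le htq2
      calc 2 / π * t = q * (2 / π * (t / q)) := by field_simp
        _ ≤ q * Real.sin (t / q) := by nlinarith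
    have hdenpos : 0 < 2 / π * t := by positivity
    have hnum : Real.sin t ≤ t := Real.sin_le ht0.le
    have hnonneg : 0 ≤ Real.sin t := Real.sin_nonneg_of_nonneg_of_le_pi ht0.le htpi
    have hden' : 0 ≤ q * Real.sin (t / q) := by linarith
    rw [Real.norm_eq_abs, abs_of_nonneg (div_nonneg hnonneg hden')]
    calc Real.sin t / (q * Real.sin (t / q)) ≤ t / (2 / π * t) :=
          div_le_div₀ ht0.le hnum hdenpos hden
      _ = π / 2 := by field_simp [pi_pos.ne']

lemma aux_denom {q t : ℝ} (hq : 3 ≤ q) (ht0 : 0 < t) (htpi : t ≤ π) :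
    3 * Real.sin (t / 3) ≤ q * Real.sin (t / q) := by
  have hq0 : (0:ℝ) < q := by linarith
  have h := aux_concave (x := t / 3) (c := 3 / q) (by positivity)
    (by linarith [div_le_self ht0.le (by norm_num : (1:ℝ) ≤ 3)])
    (by positivity) (by rw [div_le_one hq0]; linarith)
  have : 3 / q * (t / 3) = t / q := by field_simp
  rw [this] at h
  have h2 : q * (3 / q * Real.sin (t / 3)) ≤ q * Real.sin (t / q) := by nlinarith
  calc 3 * Real.sin (t / 3) = q * (3 / q * Real.sin (t / 3)) := by field_simp
    _ ≤ q * Real.sin (t / q) := h2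

lemma aux_sin3pos {t : ℝ} (ht0 : 0 < t) (htpi : t ≤ π) : 0 < Real.sin (t / 3) :=
  Real.sin_pos_of_pos_of_lt_pi (by positivity) (by linarith [pi_pos])

/-- For fixed `t ∈ (0, π/2]`, the function `q ↦ q sin(t/q)` is
increasing for `q ≥ 1`; consequently, for `q ≥ 3`,
`(2/π)∫_0^π sin t / (q sin(t/q)) dt ≤ (2/π)∫_0^π sin t / (3 sin(t/3)) dt = √3/π + 2/3`. -/
theorem q_sin_div_q_mono_and_integral_bound :
    (∀ t : ℝ, 0 < t → t ≤ π / 2 → ∀ q q' : ℝ, 1 ≤ q → q ≤ q' →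
      q * Real.sin (t / q) ≤ q' * Real.sin (t / q')) ∧
    (∀ q : ℝ, 3 ≤ q →
      (2 / π) * (∫ t in (0:ℝ)..π, Real.sin t / (q * Real.sin (t / q))) ≤
        (2 / π) * ∫ t in (0:ℝ)..π, Real.sin t / (3 * Real.sin (t / 3))) ∧
    (2 / π) * (∫ t in (0:ℝ)..π, Real.sin t / (3 * Real.sin (t / 3))) =
      Real.sqrt 3 / π + 2 / 3 := by
  refine ⟨?_, ?_, ?_⟩
  · intro t ht0 ht2 q q' hq1 hqq'
    have hq0 : (0:ℝ) < q := by linarith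
    have hq'0 : (0:ℝ) < q' := by linarith
    have h := aux_concave (x := t / q) (c := q / q')
      (by positivity)
      (by calc t / q ≤ t := div_le_self ht0.le hq1
            _ ≤ π := by linarith [pi_pos])
      (by positivity) (by rw [div_le_one hq'0]; exact hqq')
    have : q / q' * (t / q) = t / q' := by field_simp
    rw [this] at h
    calc q * Real.sin (t / q) = q' * (q / q' * Real.sin (t / q)) := by field_simp
      _ ≤ q' * Real.sin (t / q') := by nlinarith
  · intro q hq
    have h2pi : (0:ℝ) ≤ 2 / π := by positivity
    apply mul_le_mul_of_nonneg_left _ h2pi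
    apply intervalIntegral.integral_mono_on pi_pos.le (aux_integrable hq)
      (aux_integrable (le_refl 3))
    intro t ht
    obtain ⟨ht0', htpi⟩ := ht
    rcases eq_or_lt_of_le ht0' with h0 | ht0
    · simp [← h0]
    · have h3 := aux_sin3pos ht0 htpi
      exact div_le_div_of_nonneg_left (Real.sin_nonneg_of_nonneg_of_le_pi ht0.le htpi)
        (by positivity) (aux_denom hq ht0 htpi)
  · have hcongr : ∫ t in (0:ℝ)..π, Real.sin t / (3 * Real.sin (t / 3)) =
        ∫ t in (0:ℝ)..π, (1/3 + 2/3 * Real.cos (2/3 * t)) := by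
      apply intervalIntegral.integral_congr_ae
      apply MeasureTheory.ae_of_all
      intro t ht
      rw [Set.uIoc_of_le pi_pos.le] at ht
      obtain ⟨ht0, htpi⟩ := ht
      have h3 := aux_sin3pos ht0 htpi
      have hsin : Real.sin t = 3 * Real.sin (t/3) - 4 * Real.sin (t/3) ^ 3 := by
        have := Real.sin_three_mul (t/3)
        rwa [show 3 * (t/3) = t by ring] at this
      have hcos : Real.cos (2/3 * t) = 1 - 2 * Real.sin (t/3) ^ 2 := by
        rw [show 2/3 * t = 2 * (t/3) by ring, Real.cos_two_mul,
          Real.cos_sq']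
        ring
      rw [hsin, hcos]
      field_simp
      ring
    rw [hcongr]
    rw [intervalIntegral.integral_add intervalIntegrable_const (by apply Continuous.intervalIntegrable; fun_prop)]
    rw [intervalIntegral.integral_const]
    have hc : ∫ t in (0:ℝ)..π, 2/3 * Real.cos (2/3 * t) = Real.sqrt 3 / 2 := by
      rw [intervalIntegral.integral_const_mul,
        intervalIntegral.integral_comp_mul_left (fun x => Real.cos x) (by norm_num : (2/3:ℝ) ≠ 0)]
      simp only [mul_zero, integral_cos, Real.sin_zero, sub_zero, smul_eq_mul]
      have : Real.sin (2/3 * π) = Real.sqrt 3 / 2 := by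
        rw [show (2/3 * π : ℝ) = π - π/3 by ring, Real.sin_pi_sub, Real.sin_pi_div_three]
      rw [this]; ring
    rw [hc]
    field_simp
    ring
end

section
/- For m ≥ 1, let h(x) = ∑_{k=0}^{m-1} β_k x^{2k} with β_k = 2·(2m)(2m−2)···(2m−2k)/((2m−1)(2m−3)···(2m−2k−1)). Then h solves the ODE x(x²−1)h'(x) + (2m−1−2(m−1)x²)h(x) = 4m for all x. -/
/-- The coefficients `β_k = 2 (2m)(2m−2)⋯(2m−2k) / ((2m−1)(2m−3)⋯(2m−2k−1))`. -/
noncomputable def betaCoef (m k : ℕ) : ℝ :=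
  2 * (∏ j ∈ Finset.range (k + 1), ((2 * m : ℝ) - 2 * j)) /
    (∏ j ∈ Finset.range (k + 1), ((2 * m : ℝ) - 2 * j - 1))

/-- The polynomial `h(x) = ∑_{k=0}^{m−1} β_k x^{2k}`. -/
noncomputable def hFun (m : ℕ) (x : ℝ) : ℝ :=
  ∑ k ∈ Finset.range m, betaCoef m k * x ^ (2 * k)

private lemma odd_ne (n j : ℕ) : ((2 * n : ℝ) - 2 * j - 1) ≠ 0 := by
  intro h
  have h2 : ((2 * (n : ℤ) - 2 * j - 1 : ℤ) : ℝ) = 0 := by push_cast; linarith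
  have h3 : (2 * (n : ℤ) - 2 * j - 1 : ℤ) = 0 := by exact_mod_cast h2
  omega

private lemma beta_rec (m k : ℕ) :
    betaCoef m (k + 1) * ((2 * m : ℝ) - 2 * (k + 1) - 1)
      = betaCoef m k * ((2 * m : ℝ) - 2 * (k + 1)) := by
  unfold betaCoef
  rw [Finset.prod_range_succ, Finset.prod_range_succ (f := fun j => ((2 * m : ℝ) - 2 * j - 1))]
  have h1 : (∏ j ∈ Finset.range (k + 1), ((2 * m : ℝ) - 2 * j - 1)) ≠ 0 :=
    Finset.prod_ne_zero_iff.2 fun j _ => odd_ne m j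
  have h2 : ((2 * m : ℝ) - 2 * (k + 1) - 1) ≠ 0 := by
    intro h; exact odd_ne m (k + 1) (by push_cast at h ⊢; linarith)
  push_cast
  rw [div_mul_eq_mul_div, div_mul_eq_mul_div, div_eq_div_iff (mul_ne_zero h1 h2) h1]
  ring

private lemma deriv_hFun (m : ℕ) (x : ℝ) :
    deriv (hFun m) x
      = ∑ k ∈ Finset.range m, betaCoef m k * ((2 * k : ℝ) * x ^ (2 * k - 1)) := by
  have H : HasDerivAt (hFun m)
      (∑ k ∈ Finset.range m, betaCoef m k * ((2 * k : ℝ) * x ^ (2 * k - 1))) x := by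
    unfold hFun
    apply HasDerivAt.fun_sum
    intro k _
    have := (hasDerivAt_pow (2 * k) x).const_mul (betaCoef m k)
    simpa using this
  exact H.deriv

/-- `h` solves `x(x²−1)h' + (2m−1−2(m−1)x²)h = 4m`. -/
theorem hFun_ode (m : ℕ) (hm : 1 ≤ m) (x : ℝ) :
    x * (x ^ 2 - 1) * deriv (hFun m) x +
      ((2 * m : ℝ) - 1 - 2 * ((m : ℝ) - 1) * x ^ 2) * hFun m x = 4 * m := by
  obtain ⟨n, rfl⟩ : ∃ n, m = n + 1 := ⟨m - 1, by omega⟩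
  set m := n + 1 with hmdef
  rw [deriv_hFun]
  unfold hFun
  rw [Finset.mul_sum, Finset.mul_sum, ← Finset.sum_add_distrib]
  have step1 : ∀ k ∈ Finset.range m,
      x * (x ^ 2 - 1) * (betaCoef m k * ((2 * k : ℝ) * x ^ (2 * k - 1)))
        + ((2 * m : ℝ) - 1 - 2 * ((m : ℝ) - 1) * x ^ 2) * (betaCoef m k * x ^ (2 * k))
      = betaCoef m k * ((2 * m : ℝ) - 1 - 2 * k) * x ^ (2 * k)
        + betaCoef m k * (2 * k + 2 - 2 * m) * x ^ (2 * k + 2) := by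
    intro k _
    rcases k with _ | k
    · push_cast; ring
    · have e1 : 2 * (k + 1) - 1 = 2 * k + 1 := by omega
      have e2 : 2 * (k + 1) = 2 * k + 2 := by omega
      rw [e1, e2]
      push_cast
      ring
  rw [Finset.sum_congr rfl step1]
  rw [Finset.sum_add_distrib]
  rw [Finset.sum_range_succ' (fun k => betaCoef m k * ((2 * m : ℝ) - 1 - 2 * k) * x ^ (2 * k)) n]
  rw [Finset.sum_range_succ (fun k => betaCoef m k * (2 * (k : ℝ) + 2 - 2 * m) * x ^ (2 * k + 2)) n]
  have hBn : betaCoef m n * (2 * (n : ℝ) + 2 - 2 * m) * x ^ (2 * n + 2) = 0 := by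
    have : (2 * (n : ℝ) + 2 - 2 * m) = 0 := by rw [hmdef]; push_cast; ring
    rw [this]; ring
  have hA0 : betaCoef m 0 * ((2 * m : ℝ) - 1 - 2 * (0 : ℕ)) * x ^ (2 * 0) = 4 * m := by
    have h2' : (1 + (n : ℝ) * 2) ≠ 0 := by positivity
    simp only [betaCoef, zero_add, Finset.prod_range_one]
    push_cast
    have hden : (2 * ((n : ℝ) + 1) - 2 * 0 - 1) ≠ 0 := by
      intro h; apply h2'; linarith
    field_simp
    have hm0 : (2 * ((m : ℝ) - 0) - 1) ≠ 0 := by rw [hmdef]; push_cast; intro h; apply h2'; linarith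
    rw [show (2 * (m : ℝ) - 1 - 2 * 0) = 2 * ((m : ℝ) - 0) - 1 by ring]
    simp only [mul_div_assoc]
    rw [div_self hm0, mul_one]
    ring
  have hcancel : ∀ k ∈ Finset.range n,
      betaCoef m (k + 1) * ((2 * m : ℝ) - 1 - 2 * (k + 1 : ℕ)) * x ^ (2 * (k + 1))
        + betaCoef m k * (2 * (k : ℝ) + 2 - 2 * m) * x ^ (2 * k + 2) = 0 := by
    intro k _
    have e2 : 2 * (k + 1) = 2 * k + 2 := by omega
    have hr := beta_rec m k
    push_cast at hr ⊢
    rw [e2]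
    linear_combination x ^ (2 * k + 2) * hr
  rw [hBn, hA0]
  have : (∑ k ∈ Finset.range n, betaCoef m (k + 1) * ((2 * m : ℝ) - 1 - 2 * (k + 1 : ℕ)) * x ^ (2 * (k + 1)))
      + ∑ k ∈ Finset.range n, betaCoef m k * (2 * (k : ℝ) + 2 - 2 * m) * x ^ (2 * k + 2) = 0 := by
    rw [← Finset.sum_add_distrib]
    exact Finset.sum_eq_zero hcancel
  linarith [this]
end

section
/- Suppose u is smooth on (0,1), satisfies x(1−x²)u' − 4mu² + (2(m+1)x²+1−2m)u − x²/(2m) = 0, and u'(x₀) = 0 at some x₀ ∈ (0,1). Then u(x₀) ≠ 1/(4m(m+1)), and u''(x₀) = (4m(m+1)u(x₀) − 1)² / (m(1 − 2m u(x₀))(1 − 4m u(x₀))); in particular u''(x₀) ≠ 0. -/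
open Set

/-- If `u` is smooth on `(0,1)`, satisfies the Riccati equation
`x(1−x²)u' − 4mu² + (2(m+1)x²+1−2m)u − x²/(2m) = 0` there, and `u'(x₀) = 0` for
some `x₀ ∈ (0,1)`, then `u(x₀) ≠ 1/(4m(m+1))` and
`u''(x₀) = (4m(m+1)u(x₀) − 1)² / (m(1 − 2m u(x₀))(1 − 4m u(x₀)))`, which is nonzero. -/
theorem riccati_critical_point (m : ℕ) (hm : 2 ≤ m) (u : ℝ → ℝ)
    (hsmooth : ContDiffOn ℝ (⊤ : ℕ∞) u (Ioo 0 1))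
    (hode : ∀ x ∈ Ioo (0:ℝ) 1,
      x * (1 - x ^ 2) * deriv u x - 4 * m * (u x) ^ 2 +
        (2 * ((m : ℝ) + 1) * x ^ 2 + 1 - 2 * m) * u x - x ^ 2 / (2 * m) = 0)
    (x₀ : ℝ) (hx₀ : x₀ ∈ Ioo (0:ℝ) 1) (hcrit : deriv u x₀ = 0) :
    u x₀ ≠ 1 / (4 * m * ((m : ℝ) + 1)) ∧
      deriv (deriv u) x₀ =
        (4 * m * ((m : ℝ) + 1) * u x₀ - 1) ^ 2 /
          ((m : ℝ) * (1 - 2 * m * u x₀) * (1 - 4 * m * u x₀)) ∧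
      deriv (deriv u) x₀ ≠ 0 := by
  obtain ⟨hx0, hx1⟩ := hx₀
  have hmem : Ioo (0:ℝ) 1 ∈ nhds x₀ := Ioo_mem_nhds hx0 hx1
  have hM : (2:ℝ) ≤ (m:ℝ) := by exact_mod_cast hm
  have hMpos : (0:ℝ) < (m:ℝ) := by linarith
  set M : ℝ := (m:ℝ)
  set a : ℝ := u x₀ with ha
  set A : ℝ := deriv (deriv u) x₀ with hA
  -- differentiability facts
  have hu1 : HasDerivAt u (deriv u x₀) x₀ :=
    (((hsmooth.differentiableOn (by simp)).differentiableAt hmem)).hasDerivAt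
  have hd : ContDiffOn ℝ (⊤ : ℕ∞) (deriv u) (Ioo 0 1) :=
    hsmooth.deriv_of_isOpen isOpen_Ioo (by simp)
  have hu2 : HasDerivAt (deriv u) A x₀ :=
    ((hd.differentiableOn (by simp)).differentiableAt hmem).hasDerivAt
  -- derivative of the left-hand side of the ODE
  have hpoly : HasDerivAt (fun x : ℝ => x * (1 - x ^ 2))
      (1 * (1 - x₀ ^ 2) + x₀ * (-(2 * x₀ ^ 1))) x₀ :=
    (hasDerivAt_id x₀).mul ((hasDerivAt_pow 2 x₀).const_sub 1)
  have e1 : HasDerivAt (fun x : ℝ => x * (1 - x ^ 2) * deriv u x)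
      ((1 * (1 - x₀ ^ 2) + x₀ * (-(2 * x₀ ^ 1))) * deriv u x₀
        + x₀ * (1 - x₀ ^ 2) * A) x₀ := hpoly.mul hu2
  have e2 : HasDerivAt (fun x : ℝ => 4 * M * (u x) ^ 2)
      (4 * M * ((2:ℕ) * u x₀ ^ 1 * deriv u x₀)) x₀ :=
    (hu1.pow 2).const_mul (4 * M)
  have e3 : HasDerivAt (fun x : ℝ => (2 * (M + 1) * x ^ 2 + 1 - 2 * M) * u x)
      ((2 * (M + 1) * (2 * x₀ ^ 1)) * u x₀
        + (2 * (M + 1) * x₀ ^ 2 + 1 - 2 * M) * deriv u x₀) x₀ := by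
    have hg : HasDerivAt (fun x : ℝ => 2 * (M + 1) * x ^ 2 + 1 - 2 * M)
        (2 * (M + 1) * (2 * x₀ ^ 1)) x₀ := by
      simpa using (((hasDerivAt_pow 2 x₀).const_mul (2 * (M + 1))).add_const 1).sub_const (2 * M)
    exact hg.mul hu1
  have e4 : HasDerivAt (fun x : ℝ => x ^ 2 / (2 * M)) (2 * x₀ ^ 1 / (2 * M)) x₀ :=
    (hasDerivAt_pow 2 x₀).div_const (2 * M)
  have hF : HasDerivAt (fun x : ℝ => x * (1 - x ^ 2) * deriv u x - 4 * M * (u x) ^ 2 +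
        (2 * (M + 1) * x ^ 2 + 1 - 2 * M) * u x - x ^ 2 / (2 * M))
      (((1 * (1 - x₀ ^ 2) + x₀ * (-(2 * x₀ ^ 1))) * deriv u x₀ + x₀ * (1 - x₀ ^ 2) * A
        - 4 * M * ((2:ℕ) * u x₀ ^ 1 * deriv u x₀)
        + ((2 * (M + 1) * (2 * x₀ ^ 1)) * u x₀
            + (2 * (M + 1) * x₀ ^ 2 + 1 - 2 * M) * deriv u x₀))
        - 2 * x₀ ^ 1 / (2 * M)) x₀ := ((e1.sub e2).add e3).sub e4
  have heq : (fun x : ℝ => x * (1 - x ^ 2) * deriv u x - 4 * M * (u x) ^ 2 +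
        (2 * (M + 1) * x ^ 2 + 1 - 2 * M) * u x - x ^ 2 / (2 * M))
      =ᶠ[nhds x₀] (fun _ => (0:ℝ)) := by
    filter_upwards [hmem] with x hx using hode x hx
  have hD0 : (((1 * (1 - x₀ ^ 2) + x₀ * (-(2 * x₀ ^ 1))) * deriv u x₀ + x₀ * (1 - x₀ ^ 2) * A
        - 4 * M * ((2:ℕ) * u x₀ ^ 1 * deriv u x₀)
        + ((2 * (M + 1) * (2 * x₀ ^ 1)) * u x₀
            + (2 * (M + 1) * x₀ ^ 2 + 1 - 2 * M) * deriv u x₀))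
        - 2 * x₀ ^ 1 / (2 * M)) = 0 := by
    have := hF.deriv
    rw [heq.deriv_eq] at this
    simpa using this.symm
  -- the ODE at x₀
  have eq1 : - 4 * M * a ^ 2 + (2 * (M + 1) * x₀ ^ 2 + 1 - 2 * M) * a - x₀ ^ 2 / (2 * M) = 0 := by
    have := hode x₀ ⟨hx0, hx1⟩
    rw [hcrit] at this
    linarith [this]
  -- the differentiated ODE at x₀, divided by x₀
  have eq2 : (1 - x₀ ^ 2) * A + 4 * (M + 1) * a - 1 / M = 0 := by
    rw [hcrit] at hD0
    have hx0' : x₀ ≠ 0 := ne_of_gt hx0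
    have hM0 : M ≠ 0 := ne_of_gt hMpos
    field_simp at hD0 ⊢
    nlinarith [hD0, sq_nonneg x₀]
  -- key algebraic identity
  have key : (4 * M * (M + 1) * a - 1) * (1 - x₀ ^ 2) = (1 - 2 * M * a) * (4 * M * a - 1) := by
    have hM0 : M ≠ 0 := ne_of_gt hMpos
    have e1' : (- 4 * M * a ^ 2 + (2 * (M + 1) * x₀ ^ 2 + 1 - 2 * M) * a) * (2 * M)
        - x₀ ^ 2 = 0 := by
      field_simp at eq1
      linarith [eq1]
    linear_combination (-1 : ℝ) * e1'
  have ht2 : 0 < 1 - x₀ ^ 2 := by nlinarith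
  -- first claim
  have hne : a ≠ 1 / (4 * M * (M + 1)) := by
    intro h
    have hden : (4 * M * (M + 1)) ≠ 0 := by positivity
    have ha' : a * (4 * M * (M + 1)) = 1 := by
      rw [h]; field_simp
    have hz : (1 - 2 * M * a) * (4 * M * a - 1) = 0 := by
      have hN : 4 * M * (M + 1) * a - 1 = 0 := by linear_combination ha'
      linear_combination (1 - x₀ ^ 2) * hN - key
    nlinarith [hz, ha', hM, sq_nonneg (2 * M * a - 1), sq_nonneg (4 * M * a - 1),
      sq_nonneg (M * a), mul_pos hMpos hMpos]
  have hNne : 4 * M * (M + 1) * a - 1 ≠ 0 := by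
    intro h
    apply hne
    have hden : (4 * M * (M + 1)) ≠ 0 := by positivity
    field_simp
    linarith
  have hprod : (1 - 2 * M * a) * (4 * M * a - 1) ≠ 0 := by
    rw [← key]
    exact mul_ne_zero hNne (ne_of_gt ht2)
  have h2M : 1 - 2 * M * a ≠ 0 := fun h => hprod (by rw [h]; ring)
  have h4M : 1 - 4 * M * a ≠ 0 := by
    intro h
    apply hprod
    have : 4 * M * a - 1 = 0 := by linarith
    rw [this]; ring
  have hM0 : M ≠ 0 := ne_of_gt hMpos
  have hval : A = (4 * M * (M + 1) * a - 1) ^ 2 / (M * (1 - 2 * M * a) * (1 - 4 * M * a)) := by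
    rw [eq_div_iff (by exact mul_ne_zero (mul_ne_zero hM0 h2M) h4M)]
    -- from eq2: A * (1 - x₀²) * M = 1 - 4M(M+1)a
    have hMinv : M / M = 1 := div_self hM0
    have eq2' : A * (1 - x₀ ^ 2) * M = 1 - 4 * M * (M + 1) * a := by
      linear_combination M * eq2 + hMinv
    -- A * (M(1-2Ma)(1-4Ma)) = A * (-M * (1-x₀²)(4M(M+1)a-1)) by key
    calc A * (M * (1 - 2 * M * a) * (1 - 4 * M * a))
        = A * (-(M * ((1 - 2 * M * a) * (4 * M * a - 1)))) := by ring
      _ = A * (-(M * ((4 * M * (M + 1) * a - 1) * (1 - x₀ ^ 2)))) := by rw [← key]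
      _ = (A * (1 - x₀ ^ 2) * M) * (1 - 4 * M * (M + 1) * a) := by ring
      _ = (1 - 4 * M * (M + 1) * a) * (1 - 4 * M * (M + 1) * a) := by rw [eq2']
      _ = (4 * M * (M + 1) * a - 1) ^ 2 := by ring
  refine ⟨hne, hval, ?_⟩
  rw [hval]
  exact div_ne_zero (pow_ne_zero 2 hNne) (mul_ne_zero (mul_ne_zero hM0 h2M) h4M)
end

section
/- For m ≥ 2, the function u(x) = 1/h(x) − (1−x²)/2 + 1/(4m) is unimodal on [0,1]: there exists x₀ ∈ (0,1) such that u'(x) < 0 for 0 < x < x₀ and u'(x) > 0 for x₀ < x < 1. -/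
/-- The function `u(x) = 1/h(x) − (1−x²)/2 + 1/(4m)`. -/
noncomputable def uFun (m : ℕ) (x : ℝ) : ℝ :=
  1 / hFun m x - (1 - x ^ 2) / 2 + 1 / (4 * m)

namespace UP

noncomputable def bc (m k : ℕ) : ℝ := if k < m then betaCoef m k else 0

noncomputable def Tn (m n : ℕ) : ℝ := ∑ k ∈ Finset.range (n+1), bc m k * bc m (n-k)

noncomputable def Dfun (m : ℕ) (x : ℝ) : ℝ :=
  ∑ k ∈ Finset.range m, (2*k : ℝ) * betaCoef m k * x ^ (2*k - 2)

noncomputable def Sfun (m : ℕ) (x : ℝ) : ℝ := (hFun m x)^2 - Dfun m x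

noncomputable def sC (m n : ℕ) : ℝ := Tn m n - 2*(n+1) * bc m (n+1)

lemma beta_pos {m k : ℕ} (hk : k < m) : 0 < betaCoef m k := by
  unfold betaCoef
  apply div_pos
  · apply mul_pos two_pos
    apply Finset.prod_pos
    intro j hj
    simp only [Finset.mem_range] at hj
    have : (j:ℝ) ≤ (m:ℝ) - 1 := by
      have : j ≤ m - 1 := by omega
      have h1 : ((m:ℝ) - 1) = ((m-1 : ℕ) : ℝ) := by
        have : 1 ≤ m := by omega
        push_cast [Nat.cast_sub this]; ring
      rw [h1]; exact_mod_cast (by omega : j ≤ m - 1)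
    nlinarith
  · apply Finset.prod_pos
    intro j hj
    simp only [Finset.mem_range] at hj
    have : (j:ℝ) ≤ (m:ℝ) - 1 := by
      have h1 : ((m:ℝ) - 1) = ((m-1 : ℕ) : ℝ) := by
        have : 1 ≤ m := by omega
        push_cast [Nat.cast_sub this]; ring
      rw [h1]; exact_mod_cast (by omega : j ≤ m - 1)
    nlinarith

lemma bc_nonneg (m k : ℕ) : 0 ≤ bc m k := by
  unfold bc
  split
  · exact (beta_pos ‹_›).le
  · exact le_refl 0

lemma bc_pos {m k : ℕ} (hk : k < m) : 0 < bc m k := by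
  unfold bc; rw [if_pos hk]; exact beta_pos hk

lemma bc_eq {m k : ℕ} (hk : k < m) : bc m k = betaCoef m k := if_pos hk

lemma bc_zero {m k : ℕ} (hk : m ≤ k) : bc m k = 0 := if_neg (by omega)

lemma beta_rec {m k : ℕ} (hk : k + 1 < m) :
    ((2*m:ℝ) - 2*k - 3) * betaCoef m (k+1) = ((2*m:ℝ) - 2*k - 2) * betaCoef m k := by
  have hkm : (k:ℝ) + 1 ≤ (m:ℝ) - 1 := by
    have h1 : ((m:ℝ) - 1) = ((m-1 : ℕ) : ℝ) := by
      push_cast [Nat.cast_sub (by omega : 1 ≤ m)]; ring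
    rw [h1]; exact_mod_cast (by omega : k + 1 ≤ m - 1)
  have hden : ∀ j, j < k + 1 → ((2*m:ℝ) - 2*j - 1) ≠ 0 := by
    intro j hj
    have : (j:ℝ) ≤ (m:ℝ) - 1 := by
      have h1 : ((m:ℝ) - 1) = ((m-1 : ℕ) : ℝ) := by
        push_cast [Nat.cast_sub (by omega : 1 ≤ m)]; ring
      rw [h1]; exact_mod_cast (by omega : j ≤ m - 1)
    nlinarith
  have hP : (∏ j ∈ Finset.range (k+1), ((2*m:ℝ) - 2*j - 1)) ≠ 0 :=
    Finset.prod_ne_zero_iff.2 (fun j hj => hden j (Finset.mem_range.1 hj))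
  have hnum : (∏ j ∈ Finset.range (k+1+1), ((2*m:ℝ) - 2*j)) =
      (∏ j ∈ Finset.range (k+1), ((2*m:ℝ) - 2*j)) * ((2*m:ℝ) - 2*(k+1:ℕ)) :=
    Finset.prod_range_succ _ _
  have hden2 : (∏ j ∈ Finset.range (k+1+1), ((2*m:ℝ) - 2*j - 1)) =
      (∏ j ∈ Finset.range (k+1), ((2*m:ℝ) - 2*j - 1)) * ((2*m:ℝ) - 2*(k+1:ℕ) - 1) :=
    Finset.prod_range_succ _ _
  have hlast : ((2*m:ℝ) - 2*(k+1:ℕ) - 1) ≠ 0 := by push_cast; nlinarith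
  unfold betaCoef
  rw [hnum, hden2]
  push_cast
  push_cast at hP hlast
  rw [mul_div_assoc', mul_div_assoc', div_eq_div_iff (mul_ne_zero hP hlast) hP]
  ring

lemma bc_rec (m : ℕ) (hm : 2 ≤ m) (k : ℕ) :
    ((2*m:ℝ) - 2*k - 3) * bc m (k+1) = ((2*m:ℝ) - 2*k - 2) * bc m k := by
  rcases lt_trichotomy (k+1) m with h | h | h
  · rw [bc_eq h, bc_eq (by omega : k < m)]
    exact beta_rec h
  · rw [bc_zero (le_of_eq h.symm), bc_eq (by omega : k < m)]
    have : ((2*m:ℝ) - 2*k - 2) = 0 := by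
      have : (k:ℝ) = (m:ℝ) - 1 := by
        have : ((m:ℝ) - 1) = ((m-1:ℕ):ℝ) := by
          push_cast [Nat.cast_sub (by omega : 1 ≤ m)]; ring
        rw [this]; exact_mod_cast (by omega : k = m - 1)
      rw [this]; ring
    rw [this]; ring
  · rw [bc_zero (by omega), bc_zero (by omega)]; ring

lemma beta0 (m : ℕ) (hm : 2 ≤ m) : betaCoef m 0 = 4*m / (2*m - 1) := by
  unfold betaCoef
  rw [Finset.prod_range_one, Finset.prod_range_one]
  push_cast
  ring_nf

lemma bc0_mul (m : ℕ) (hm : 2 ≤ m) : ((2*m:ℝ) - 1) * bc m 0 = 4*m := by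
  rw [bc_eq (by omega : 0 < m), beta0 m hm]
  have h1 : ((2*m:ℝ) - 1) ≠ 0 := by
    have : (2:ℝ) ≤ (m:ℝ) := by exact_mod_cast hm
    nlinarith
  field_simp

lemma refl_weight (m : ℕ) (c : ℝ) (N : ℕ) :
    ∑ k ∈ Finset.range (N+1), (c - 2*(k:ℝ)) * bc m k * bc m (N-k) = (c - N) * Tn m N := by
  have hrefl := Finset.sum_range_reflect
    (fun k => (c - 2*(k:ℝ)) * bc m k * bc m (N-k)) (N+1)
  simp only [Nat.add_sub_cancel] at hrefl
  have key : ∑ k ∈ Finset.range (N+1),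
      ((c - 2*(k:ℝ)) * bc m k * bc m (N-k) + (c - 2*((N-k:ℕ):ℝ)) * bc m (N-k) * bc m (N-(N-k)))
      = ∑ k ∈ Finset.range (N+1), (2*c - 2*(N:ℝ)) * (bc m k * bc m (N-k)) := by
    apply Finset.sum_congr rfl
    intro k hk
    have hkN : k ≤ N := by simpa using Nat.lt_succ_iff.1 (Finset.mem_range.1 hk)
    rw [Nat.sub_sub_self hkN, Nat.cast_sub hkN]
    ring
  rw [Finset.sum_add_distrib] at key
  rw [hrefl] at key
  rw [← Finset.mul_sum] at key
  unfold Tn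
  linarith [key]

lemma Trec (m : ℕ) (hm : 2 ≤ m) (N : ℕ) :
    ((2*m:ℝ) - 2 - N) * Tn m (N+1) = 4*m * bc m (N+1) + ((2*m:ℝ) - 2 - N) * Tn m N := by
  have h1 : ∑ k ∈ Finset.range (N+2), ((2*m:ℝ) - 1 - 2*(k:ℝ)) * bc m k * bc m (N+1-k)
      = ((2*m:ℝ) - 1 - (N+1:ℕ)) * Tn m (N+1) := by
    have := refl_weight m ((2*m:ℝ) - 1) (N+1)
    convert this using 2 <;> push_cast <;> ring
  have h2 : ∑ k ∈ Finset.range (N+2), ((2*m:ℝ) - 1 - 2*(k:ℝ)) * bc m k * bc m (N+1-k)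
      = 4*m * bc m (N+1) + ∑ i ∈ Finset.range (N+1), ((2*m:ℝ) - 2 - 2*(i:ℝ)) * bc m i * bc m (N-i) := by
    rw [Finset.sum_range_succ' (fun k => ((2*m:ℝ) - 1 - 2*(k:ℝ)) * bc m k * bc m (N+1-k)) (N+1)]
    have e0 : ((2*m:ℝ) - 1 - 2*((0:ℕ):ℝ)) * bc m 0 * bc m (N+1-0) = 4*m * bc m (N+1) := by
      simp only [Nat.cast_zero, Nat.sub_zero]
      have := bc0_mul m hm
      linear_combination bc m (N+1) * this
    rw [e0, add_comm]
    congr 1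
    apply Finset.sum_congr rfl
    intro i hi
    have : ((2*m:ℝ) - 1 - 2*((i+1:ℕ):ℝ)) = ((2*m:ℝ) - 2*i - 3) := by push_cast; ring
    rw [this]
    have hsub : N + 1 - (i+1) = N - i := by omega
    rw [hsub]
    have := bc_rec m hm i
    linear_combination bc m (N-i) * this
  have h3 : ∑ i ∈ Finset.range (N+1), ((2*m:ℝ) - 2 - 2*(i:ℝ)) * bc m i * bc m (N-i)
      = ((2*m:ℝ) - 2 - N) * Tn m N := refl_weight m ((2*m:ℝ) - 2) N
  have h4 : ((2*m:ℝ) - 1 - ((N+1:ℕ):ℝ)) = ((2*m:ℝ) - 2 - N) := by push_cast; ring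
  rw [h2, h3] at h1
  rw [h4] at h1
  linarith

lemma beta1 (m : ℕ) (hm : 2 ≤ m) :
    betaCoef m 1 = 2 * ((2*m) * (2*m - 2)) / ((2*m - 1) * (2*m - 3)) := by
  unfold betaCoef
  simp only [Finset.prod_range_succ, Finset.prod_range_zero, Nat.cast_zero, Nat.cast_one,
    one_mul]
  push_cast
  ring_nf

lemma base_strict (m : ℕ) (hm : 2 ≤ m) : Tn m 0 < 2 * bc m 1 := by
  have hM : (2:ℝ) ≤ (m:ℝ) := by exact_mod_cast hm
  unfold Tn
  rw [Finset.sum_range_one]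
  simp only [Nat.sub_zero]
  rw [bc_eq (by omega : 0 < m), bc_eq (by omega : 1 < m), beta0 m hm, beta1 m hm]
  rw [div_mul_div_comm]
  have h1 : (0:ℝ) < (2*m - 1) * (2*m - 1) := by nlinarith
  have h2 : (0:ℝ) < (2*m - 1) * (2*m - 3) := by nlinarith
  rw [div_lt_iff₀ h1]
  have : 2 * (2 * ((2*(m:ℝ)) * (2*m - 2)) / ((2*m - 1) * (2*m - 3))) =
      (4 * ((2*(m:ℝ)) * (2*m - 2))) / ((2*m - 1) * (2*m - 3)) := by ring
  rw [this, div_mul_eq_mul_div, lt_div_iff₀ h2]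
  nlinarith [sq_nonneg ((m:ℝ) - 2), sq_nonneg ((m:ℝ))]

lemma Tn_le (m : ℕ) (hm : 2 ≤ m) : ∀ n, n + 2 ≤ m → Tn m n ≤ 2*(n+1) * bc m (n+1) := by
  intro n
  induction n with
  | zero =>
    intro _
    have := base_strict m hm
    push_cast
    linarith
  | succ n ih =>
    intro hn
    have hM : (2:ℝ) ≤ (m:ℝ) := by exact_mod_cast hm
    have hnm : (n:ℝ) + 3 ≤ (m:ℝ) := by exact_mod_cast (by omega : n + 3 ≤ m)
    have ihh := ih (by omega)
    have trec := Trec m hm n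
    have hrec := bc_rec m hm (n+1)
    have hb1 : 0 < bc m (n+1) := bc_pos (by omega : n + 1 < m)
    have hb2 : 0 < bc m (n+2) := bc_pos (by omega : n + 2 < m)
    have hc1 : (0:ℝ) < (2*m:ℝ) - 2 - n := by linarith
    have hc2 : (0:ℝ) < (2*m:ℝ) - 2*(n+1) - 3 := by push_cast; linarith
    -- from trec and ihh : (2m-2-n) * Tn (n+1) ≤ 4m bc(n+1) + (2m-2-n)*2*(n+1)*bc(n+1)
    have step1 : ((2*m:ℝ) - 2 - n) * Tn m (n+1) ≤
        4*m * bc m (n+1) + ((2*m:ℝ) - 2 - n) * (2*(n+1) * bc m (n+1)) := by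
      rw [trec]
      have := mul_le_mul_of_nonneg_left ihh hc1.le
      linarith
    -- key polynomial inequality times bc(n+1):
    -- (4M + 2(n+1)(2M-2-n)) * (2M-2n-5) ≤ 2(n+2)(2M-2-n)(2M-2n-4)
    have hpoly : (4*(m:ℝ) + 2*((n:ℝ)+1)*((2*m:ℝ)-2-n)) * ((2*m:ℝ)-2*(n:ℝ)-5) ≤
        2*((n:ℝ)+2)*((2*m:ℝ)-2-n)*((2*m:ℝ)-2*(n:ℝ)-4) := by
      nlinarith [sq_nonneg ((n:ℝ)+1), mul_nonneg (by linarith : (0:ℝ) ≤ (n:ℝ)) (by linarith : (0:ℝ) ≤ (n:ℝ))]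
    -- hrec : (2m - 2(n+1) - 3) bc(n+2) = (2m - 2(n+1) - 2) bc(n+1)
    have hrec' : ((2*m:ℝ) - 2*(n:ℝ) - 5) * bc m (n+2) = ((2*m:ℝ) - 2*(n:ℝ) - 4) * bc m (n+1) := by
      have e1 : ((2*m:ℝ) - 2*((n+1:ℕ):ℝ) - 3) = ((2*m:ℝ) - 2*(n:ℝ) - 5) := by push_cast; ring
      have e2 : ((2*m:ℝ) - 2*((n+1:ℕ):ℝ) - 2) = ((2*m:ℝ) - 2*(n:ℝ) - 4) := by push_cast; ring
      rw [e1, e2] at hrec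
      exact hrec
    -- conclude: Tn (n+1) ≤ 2(n+2) bc(n+2)
    have goal1 : ((2*m:ℝ) - 2 - n) * ((2*m:ℝ)-2*(n:ℝ)-5) * Tn m (n+1) ≤
        ((2*m:ℝ) - 2 - n) * ((2*m:ℝ)-2*(n:ℝ)-5) * (2*((n:ℝ)+2) * bc m (n+2)) := by
      have lhs1 : ((2*m:ℝ)-2*(n:ℝ)-5) * (((2*m:ℝ) - 2 - n) * Tn m (n+1)) ≤
          ((2*m:ℝ)-2*(n:ℝ)-5) * (4*m * bc m (n+1) + ((2*m:ℝ) - 2 - n) * (2*(n+1) * bc m (n+1))) :=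
        mul_le_mul_of_nonneg_left step1 (by push_cast; linarith)
      have rhs1 : ((2*m:ℝ)-2*(n:ℝ)-5) * (4*m * bc m (n+1) + ((2*m:ℝ) - 2 - n) * (2*(n+1) * bc m (n+1)))
          ≤ 2*((n:ℝ)+2)*((2*m:ℝ)-2-n) * (((2*m:ℝ)-2*(n:ℝ)-4) * bc m (n+1)) := by
        have := mul_le_mul_of_nonneg_right hpoly hb1.le
        push_cast
        nlinarith [this]
      rw [← hrec'] at rhs1
      push_cast
      nlinarith [lhs1, rhs1]
    have hpos : (0:ℝ) < ((2*m:ℝ) - 2 - n) * ((2*m:ℝ)-2*(n:ℝ)-5) := by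
      apply mul_pos hc1
      push_cast at hc2 ⊢
      linarith
    have := le_of_mul_le_mul_left (by
      calc ((2*m:ℝ) - 2 - n) * ((2*m:ℝ)-2*(n:ℝ)-5) * Tn m (n+1)
          ≤ ((2*m:ℝ) - 2 - n) * ((2*m:ℝ)-2*(n:ℝ)-5) * (2*((n:ℝ)+2) * bc m (n+2)) := goal1) hpos
    push_cast
    linarith [this]

lemma low_nonpos (m : ℕ) (hm : 2 ≤ m) {n : ℕ} (hn : n + 2 ≤ m) : sC m n ≤ 0 := by
  have := Tn_le m hm n hn
  unfold sC
  linarith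

lemma Tn_nonneg (m n : ℕ) : 0 ≤ Tn m n := by
  apply Finset.sum_nonneg
  intro k _
  exact mul_nonneg (bc_nonneg m k) (bc_nonneg m _)

lemma high_nonneg (m : ℕ) {n : ℕ} (hn : m ≤ n + 1) : 0 ≤ sC m n := by
  unfold sC
  rw [bc_zero hn]
  simpa using Tn_nonneg m n

lemma sC_high_eq (m : ℕ) {n : ℕ} (hn : m ≤ n + 1) : sC m n = Tn m n := by
  unfold sC; rw [bc_zero hn]; ring

lemma top_pos (m : ℕ) (hm : 2 ≤ m) : 0 < sC m (2*m - 2) := by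
  rw [sC_high_eq m (by omega)]
  unfold Tn
  have hmem : m - 1 ∈ Finset.range (2*m - 2 + 1) := by
    simp only [Finset.mem_range]; omega
  have hsingle := Finset.single_le_sum
    (f := fun k => bc m k * bc m (2*m - 2 - k))
    (fun k _ => mul_nonneg (bc_nonneg m k) (bc_nonneg m _)) hmem
  have he : 2*m - 2 - (m - 1) = m - 1 := by omega
  rw [he] at hsingle
  have : 0 < bc m (m-1) * bc m (m-1) :=
    mul_pos (bc_pos (by omega)) (bc_pos (by omega))
  linarith

lemma hFun_ext (m : ℕ) (hm : 2 ≤ m) (x : ℝ) :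
    hFun m x = ∑ k ∈ Finset.range (2*m - 1), bc m k * x ^ (2*k) := by
  unfold hFun
  have e1 : ∑ k ∈ Finset.range m, betaCoef m k * x ^ (2*k)
      = ∑ k ∈ Finset.range m, bc m k * x ^ (2*k) :=
    Finset.sum_congr rfl (fun k hk => by rw [bc_eq (Finset.mem_range.1 hk)])
  rw [e1]
  exact Finset.sum_subset (Finset.range_subset_range.2 (by omega : m ≤ 2*m - 1))
    (fun k _ hk => by rw [bc_zero (by simpa using hk)]; ring)

lemma SQ (m : ℕ) (hm : 2 ≤ m) (x : ℝ) :
    (hFun m x)^2 = ∑ n ∈ Finset.range (2*m - 1), Tn m n * x ^ (2*n) := by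
  classical
  set M := 2*m - 1 with hM
  rw [hFun_ext m hm x, sq, Finset.sum_mul_sum]
  have step1 : ∑ k ∈ Finset.range M, ∑ l ∈ Finset.range M,
      (bc m k * x ^ (2*k)) * (bc m l * x ^ (2*l))
      = ∑ p ∈ Finset.range M ×ˢ Finset.range M,
        bc m p.1 * bc m p.2 * x ^ (2*(p.1 + p.2)) := by
    rw [Finset.sum_product]
    apply Finset.sum_congr rfl; intro k _
    apply Finset.sum_congr rfl; intro l _
    rw [Nat.mul_add, pow_add]
    ring
  rw [step1]
  have hsub : (Finset.range M).biUnion Finset.HasAntidiagonal.antidiagonal ⊆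
      Finset.range M ×ˢ Finset.range M := by
    intro p hp
    rcases Finset.mem_biUnion.1 hp with ⟨n, hn, hpn⟩
    have := Finset.HasAntidiagonal.mem_antidiagonal.1 hpn
    simp only [Finset.mem_product, Finset.mem_range] at *
    omega
  rw [← Finset.sum_subset hsub]
  · have hdisj : ∀ n₁ ∈ (Finset.range M : Finset ℕ), ∀ n₂ ∈ (Finset.range M : Finset ℕ),
        n₁ ≠ n₂ → Disjoint (Finset.HasAntidiagonal.antidiagonal n₁) (Finset.HasAntidiagonal.antidiagonal n₂) := by
      intro n₁ _ n₂ _ hne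
      rw [Finset.disjoint_left]
      intro p h1 h2
      exact hne ((Finset.HasAntidiagonal.mem_antidiagonal.1 h1).symm.trans (Finset.HasAntidiagonal.mem_antidiagonal.1 h2))
    rw [Finset.sum_biUnion hdisj]
    apply Finset.sum_congr rfl
    intro n _
    have inner : ∑ p ∈ Finset.HasAntidiagonal.antidiagonal n, bc m p.1 * bc m p.2 * x ^ (2*(p.1+p.2))
        = ∑ p ∈ Finset.HasAntidiagonal.antidiagonal n, bc m p.1 * bc m p.2 * x ^ (2*n) := by
      apply Finset.sum_congr rfl
      intro p hp
      rw [Finset.HasAntidiagonal.mem_antidiagonal.1 hp]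
    rw [inner, ← Finset.sum_mul]
    congr 1
    rw [Finset.Nat.sum_antidiagonal_eq_sum_range_succ_mk (fun p => bc m p.1 * bc m p.2) n]
    rfl
  · intro p hp hnp
    simp only [Finset.mem_product, Finset.mem_range] at hp
    have hge : M ≤ p.1 + p.2 := by
      by_contra hlt
      push_neg at hlt
      exact hnp (Finset.mem_biUnion.2 ⟨p.1 + p.2, Finset.mem_range.2 hlt,
        Finset.HasAntidiagonal.mem_antidiagonal.2 rfl⟩)
    have : m ≤ p.1 ∨ m ≤ p.2 := by omega
    rcases this with h | h
    · rw [bc_zero h]; ring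
    · rw [bc_zero h]; ring

lemma Dexp (m : ℕ) (hm : 2 ≤ m) (x : ℝ) :
    Dfun m x = ∑ n ∈ Finset.range (2*m - 1), 2*((n:ℝ)+1) * bc m (n+1) * x ^ (2*n) := by
  unfold Dfun
  have hm1 : m = (m - 1) + 1 := by omega
  rw [hm1, Finset.sum_range_succ' (fun k => (2*(k:ℝ)) * betaCoef ((m-1)+1) k * x ^ (2*k - 2)) (m-1)]
  rw [← hm1]
  simp only [Nat.cast_zero, mul_zero, zero_mul, add_zero]
  rw [← Finset.sum_subset (Finset.range_subset_range.2 (by omega : m - 1 ≤ 2*m - 1))]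
  · apply Finset.sum_congr rfl
    intro i hi
    have hi' : i + 1 < m := by
      have := Finset.mem_range.1 hi; omega
    rw [bc_eq hi']
    have : 2*(i+1) - 2 = 2*i := by omega
    rw [this]
    push_cast
    ring
  · intro n _ hn
    rw [bc_zero (by simp only [Finset.mem_range] at hn; omega)]
    ring

lemma Sexp (m : ℕ) (hm : 2 ≤ m) (x : ℝ) :
    Sfun m x = ∑ n ∈ Finset.range (2*m - 1), sC m n * x ^ (2*n) := by
  unfold Sfun
  rw [SQ m hm x, Dexp m hm x, ← Finset.sum_sub_distrib]
  apply Finset.sum_congr rfl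
  intro n _
  unfold sC
  push_cast
  ring

lemma key (m : ℕ) (hm : 2 ≤ m) {a b : ℝ} (ha : 0 < a) (hab : a < b) (hb : b ≤ 1) :
    b ^ (2*(m-1)) * Sfun m a < a ^ (2*(m-1)) * Sfun m b := by
  have hdiff : a ^ (2*(m-1)) * Sfun m b - b ^ (2*(m-1)) * Sfun m a
      = ∑ n ∈ Finset.range (2*m - 1),
          sC m n * (a ^ (2*(m-1)) * b ^ (2*n) - b ^ (2*(m-1)) * a ^ (2*n)) := by
    rw [Sexp m hm a, Sexp m hm b, Finset.mul_sum, Finset.mul_sum, ← Finset.sum_sub_distrib]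
    apply Finset.sum_congr rfl
    intro n _
    ring
  have hb0 : 0 < b := lt_trans ha hab
  have hterm : ∀ n ∈ Finset.range (2*m - 1),
      0 ≤ sC m n * (a ^ (2*(m-1)) * b ^ (2*n) - b ^ (2*(m-1)) * a ^ (2*n)) := by
    intro n _
    rcases le_or_gt (n+2) m with hlow | hhigh
    · -- n ≤ m-2 : sC ≤ 0 and bracket ≤ 0
      have hsC := low_nonpos m hm hlow
      have hbr : a ^ (2*(m-1)) * b ^ (2*n) - b ^ (2*(m-1)) * a ^ (2*n) ≤ 0 := by
        have he : 2*(m-1) = 2*n + 2*(m-1-n) := by omega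
        rw [he, pow_add, pow_add]
        have hpow : a ^ (2*(m-1-n)) ≤ b ^ (2*(m-1-n)) :=
          pow_le_pow_left₀ ha.le hab.le _
        nlinarith [pow_nonneg ha.le (2*n), pow_nonneg hb0.le (2*n),
          pow_nonneg ha.le (2*(m-1-n)), mul_nonneg (pow_nonneg ha.le (2*n)) (pow_nonneg hb0.le (2*n))]
      nlinarith [mul_nonneg (neg_nonneg.2 hsC) (neg_nonneg.2 hbr)]
    · -- m-1 ≤ n : sC ≥ 0 and bracket ≥ 0
      have hsC := high_nonneg m (by omega : m ≤ n + 1)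
      have hbr : 0 ≤ a ^ (2*(m-1)) * b ^ (2*n) - b ^ (2*(m-1)) * a ^ (2*n) := by
        have he : 2*n = 2*(m-1) + 2*(n-(m-1)) := by omega
        rw [he, pow_add, pow_add]
        have hpow : a ^ (2*(n-(m-1))) ≤ b ^ (2*(n-(m-1))) :=
          pow_le_pow_left₀ ha.le hab.le _
        nlinarith [pow_nonneg ha.le (2*(m-1)), pow_nonneg hb0.le (2*(m-1)),
          mul_nonneg (pow_nonneg ha.le (2*(m-1))) (pow_nonneg hb0.le (2*(m-1)))]
      exact mul_nonneg hsC hbr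
  have htop : 0 < sC m (2*m - 2) *
      (a ^ (2*(m-1)) * b ^ (2*(2*m - 2)) - b ^ (2*(m-1)) * a ^ (2*(2*m - 2))) := by
    apply mul_pos (top_pos m hm)
    have he : 2*(2*m - 2) = 2*(m-1) + 2*(m-1) := by omega
    rw [he, pow_add, pow_add]
    have hlt : a ^ (2*(m-1)) < b ^ (2*(m-1)) := by
      apply pow_lt_pow_left₀ hab ha.le
      omega
    nlinarith [pow_pos ha (2*(m-1)), pow_pos hb0 (2*(m-1)),
      mul_pos (pow_pos ha (2*(m-1))) (pow_pos hb0 (2*(m-1)))]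
  have hmem : 2*m - 2 ∈ Finset.range (2*m - 1) := Finset.mem_range.2 (by omega)
  have hsum : 0 < ∑ n ∈ Finset.range (2*m - 1),
      sC m n * (a ^ (2*(m-1)) * b ^ (2*n) - b ^ (2*(m-1)) * a ^ (2*n)) := by
    apply Finset.sum_pos' hterm ⟨2*m - 2, hmem, htop⟩
  linarith [hdiff ▸ hsum]

lemma S0 (m : ℕ) (hm : 2 ≤ m) : Sfun m 0 < 0 := by
  rw [Sexp m hm 0]
  rw [Finset.sum_eq_single 0]
  · have h1 : sC m 0 < 0 := by
      unfold sC
      have := base_strict m hm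
      unfold Tn at this ⊢
      push_cast
      linarith
    simpa using h1
  · intro n _ hn
    rw [zero_pow (by omega : 2*n ≠ 0)]
    ring
  · intro h
    exact absurd (Finset.mem_range.2 (by omega : 0 < 2*m - 1)) h

lemma sum_beta (m : ℕ) (hm : 2 ≤ m) : ∑ k ∈ Finset.range m, betaCoef m k = 4*m := by
  have hM : (2:ℝ) ≤ (m:ℝ) := by exact_mod_cast hm
  set g : ℕ → ℝ := fun k => ((2*m:ℝ) - 2*k - 2) * betaCoef m k with hg
  have tel : ∑ i ∈ Finset.range (m-1), (g i - g (i+1)) = g 0 - g (m-1) :=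
    Finset.sum_range_sub' g (m-1)
  have hterm : ∀ i ∈ Finset.range (m-1), g i - g (i+1) = betaCoef m (i+1) := by
    intro i hi
    have hi' : i + 1 < m := by have := Finset.mem_range.1 hi; omega
    have hrec := beta_rec hi'
    simp only [hg]
    push_cast
    linear_combination -hrec
  rw [Finset.sum_congr rfl hterm] at tel
  have hgm : g (m-1) = 0 := by
    simp only [hg]
    have : ((2*m:ℝ) - 2*((m-1:ℕ):ℝ) - 2) = 0 := by
      push_cast [Nat.cast_sub (by omega : 1 ≤ m)]
      ring
    rw [this]; ring
  have hsplit : ∑ k ∈ Finset.range m, betaCoef m k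
      = (∑ i ∈ Finset.range (m-1), betaCoef m (i+1)) + betaCoef m 0 := by
    have hm1 : m = (m - 1) + 1 := by omega
    rw [hm1, Finset.sum_range_succ' (fun k => betaCoef ((m-1)+1) k) (m-1), ← hm1]
  rw [hsplit, tel, hgm]
  simp only [hg]
  rw [beta0 m hm]
  have h1 : ((2*m:ℝ) - 1) ≠ 0 := by nlinarith
  push_cast
  field_simp
  ring

lemma S1 (m : ℕ) (hm : 2 ≤ m) : 0 < Sfun m 1 := by
  have hM : (2:ℝ) ≤ (m:ℝ) := by exact_mod_cast hm
  unfold Sfun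
  have h1 : hFun m 1 = 4*m := by
    unfold hFun
    simp only [one_pow, mul_one]
    exact sum_beta m hm
  have h2 : Dfun m 1 ≤ 2*((m:ℝ)-1) * (4*m) := by
    unfold Dfun
    rw [← sum_beta m hm, Finset.mul_sum]
    apply Finset.sum_le_sum
    intro k hk
    have hk' : k < m := Finset.mem_range.1 hk
    have hkR : (k:ℝ) ≤ (m:ℝ) - 1 := by
      have h1 : ((m:ℝ) - 1) = ((m-1:ℕ):ℝ) := by
        push_cast [Nat.cast_sub (by omega : 1 ≤ m)]; ring
      rw [h1]; exact_mod_cast (by omega : k ≤ m - 1)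
    simp only [one_pow, mul_one]
    have := (beta_pos hk').le
    nlinarith
  rw [h1]
  nlinarith

lemma hFun_pos (m : ℕ) (hm : 2 ≤ m) (x : ℝ) : 0 < hFun m x := by
  unfold hFun
  have hmem : 0 ∈ Finset.range m := Finset.mem_range.2 (by omega)
  have hsingle := Finset.single_le_sum
    (f := fun k => betaCoef m k * x ^ (2*k))
    (fun k hk => mul_nonneg (beta_pos (Finset.mem_range.1 hk)).le
      (by rw [pow_mul]; positivity)) hmem
  simp only [Nat.mul_zero, pow_zero, mul_one] at hsingle
  have := beta_pos (show 0 < m by omega)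
  linarith

lemma hasDerivAt_hFun (m : ℕ) (x : ℝ) :
    HasDerivAt (hFun m) (x * Dfun m x) x := by
  have h := HasDerivAt.fun_sum (fun k (_ : k ∈ Finset.range m) =>
    ((hasDerivAt_pow (2*k) x).const_mul (betaCoef m k)))
  have heq : ∑ k ∈ Finset.range m, betaCoef m k * (((2*k : ℕ):ℝ) * x ^ (2*k - 1))
      = x * Dfun m x := by
    unfold Dfun
    rw [Finset.mul_sum]
    apply Finset.sum_congr rfl
    intro k _
    rcases Nat.eq_zero_or_pos k with rfl | hk
    · simp
    · rw [show 2*k - 1 = 2*k - 2 + 1 by omega, pow_succ]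
      push_cast
      ring
  rw [heq] at h
  exact h

lemma deriv_uFun (m : ℕ) (hm : 2 ≤ m) (x : ℝ) :
    deriv (uFun m) x = x * Sfun m x / (hFun m x)^2 := by
  have hpos := hFun_pos m hm x
  have hne : hFun m x ≠ 0 := ne_of_gt hpos
  have h1 := hasDerivAt_hFun m x
  have h2 : HasDerivAt (fun y => 1 / hFun m y) (-(x * Dfun m x) / (hFun m x)^2) x := by
    have := h1.inv hne
    simp only [one_div]
    exact this
  have h3 : HasDerivAt (fun y : ℝ => (1 - y^2)/2) ((-(((2:ℕ):ℝ) * x ^ (2-1)))/2) x :=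
    (HasDerivAt.const_sub 1 (hasDerivAt_pow 2 x)).div_const 2
  have h4 : HasDerivAt (uFun m)
      (-(x * Dfun m x) / (hFun m x)^2 - (-(((2:ℕ):ℝ) * x ^ (2-1)))/2) x :=
    by have := HasDerivAt.add_const (1 / (4 * (m:ℝ))) (h2.sub h3); exact this
  rw [h4.deriv]
  unfold Sfun
  field_simp
  ring

theorem uFun_unimodal' (m : ℕ) (hm : 2 ≤ m) :
    ∃ x₀ ∈ Set.Ioo (0:ℝ) 1,
      (∀ x : ℝ, 0 < x → x < x₀ → deriv (uFun m) x < 0) ∧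
      (∀ x : ℝ, x₀ < x → x < 1 → 0 < deriv (uFun m) x) := by
  have hc : Continuous (Sfun m) := by
    unfold Sfun Dfun hFun
    apply Continuous.sub
    · exact (continuous_finset_sum _ (fun k _ => (continuous_const.mul (continuous_pow (2*k))))).pow 2
    · exact continuous_finset_sum _ (fun k _ => continuous_const.mul (continuous_pow (2*k-2)))
  -- negativity near 0
  have hev0 : ∀ᶠ y in nhds (0:ℝ), Sfun m y < 0 :=
    Filter.Tendsto.eventually_lt_const (S0 m hm) hc.continuousAt
  rw [Metric.eventually_nhds_iff] at hev0
  obtain ⟨ε, hε, hball0⟩ := hev0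
  -- positivity near 1
  have hev1 : ∀ᶠ y in nhds (1:ℝ), 0 < Sfun m y :=
    Filter.Tendsto.eventually_const_lt (S1 m hm) hc.continuousAt
  rw [Metric.eventually_nhds_iff] at hev1
  obtain ⟨δ, hδ, hball1⟩ := hev1
  set A : Set ℝ := {y : ℝ | (y ∈ Set.Ioc (0:ℝ) 1) ∧ 0 ≤ Sfun m y} with hA
  set x₁ : ℝ := max (1 - δ/2) (1/2) with hx₁
  have hx₁0 : 0 < x₁ := lt_of_lt_of_le (by norm_num) (le_max_right _ _)
  have hx₁1 : x₁ < 1 := by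
    apply max_lt
    · linarith
    · norm_num
  have hx₁S : 0 < Sfun m x₁ := by
    apply hball1
    rw [Real.dist_eq, abs_sub_lt_iff]
    constructor
    · linarith
    · have : 1 - δ/2 ≤ x₁ := le_max_left _ _
      linarith
  have hx₁A : x₁ ∈ A := ⟨⟨hx₁0, hx₁1.le⟩, hx₁S.le⟩
  have hAne : A.Nonempty := ⟨x₁, hx₁A⟩
  have hbdd : BddBelow A := ⟨0, fun y hy => hy.1.1.le⟩
  set x₀ : ℝ := sInf A with hx₀
  have hx₀lb : ε ≤ x₀ := by
    apply le_csInf hAne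
    intro y hy
    by_contra hlt
    push_neg at hlt
    have : Sfun m y < 0 := by
      apply hball0
      rw [Real.dist_eq, sub_zero, abs_of_pos hy.1.1]
      exact hlt
    linarith [hy.2]
  have hx₀pos : 0 < x₀ := lt_of_lt_of_le hε hx₀lb
  have hx₀lt1 : x₀ < 1 := lt_of_le_of_lt (csInf_le hbdd hx₁A) hx₁1
  refine ⟨x₀, ⟨hx₀pos, hx₀lt1⟩, ?_, ?_⟩
  · intro x hx hxlt
    have hx1 : x ≤ 1 := by linarith
    have hS : Sfun m x < 0 := by
      by_contra hge
      push_neg at hge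
      have : x ∈ A := ⟨⟨hx, hx1⟩, hge⟩
      have := csInf_le hbdd this
      linarith
    rw [deriv_uFun m hm x]
    apply div_neg_of_neg_of_pos
    · exact mul_neg_of_pos_of_neg hx hS
    · exact pow_pos (hFun_pos m hm x) 2
  · intro x hx hxlt
    obtain ⟨a, haA, halt⟩ := exists_lt_of_csInf_lt hAne hx
    have ha0 : 0 < a := haA.1.1
    have hkey := key m hm ha0 halt hxlt.le
    have h1 : 0 ≤ x ^ (2*(m-1)) * Sfun m a :=
      mul_nonneg (pow_nonneg (by linarith [hx₀pos] : (0:ℝ) ≤ x) _) haA.2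
    have h2 : 0 < a ^ (2*(m-1)) * Sfun m x := lt_of_le_of_lt h1 hkey
    have hS : 0 < Sfun m x := by
      by_contra hle
      push_neg at hle
      nlinarith [pow_pos ha0 (2*(m-1))]
    rw [deriv_uFun m hm x]
    apply div_pos
    · exact mul_pos (by linarith [hx₀pos]) hS
    · exact pow_pos (hFun_pos m hm x) 2

end UP

/-- For `m ≥ 2`, `u` is unimodal on `[0,1]`: there is
`x₀ ∈ (0,1)` with `u' < 0` on `(0,x₀)` and `u' > 0` on `(x₀,1)`. -/
theorem uFun_unimodal (m : ℕ) (hm : 2 ≤ m) :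
    ∃ x₀ ∈ Set.Ioo (0:ℝ) 1,
      (∀ x : ℝ, 0 < x → x < x₀ → deriv (uFun m) x < 0) ∧
      (∀ x : ℝ, x₀ < x → x < 1 → 0 < deriv (uFun m) x) := by
  exact UP.uFun_unimodal' m hm
end

section
/- For every integer m ≥ 1, ∑_{l=0}^{m−1} (m−l−1)·C(2m−1, l) = (m/2)·C(2m−1, m−1) − 2^{2m−3}, where C(n,k) denotes the binomial coefficient. -/
open Finset

lemma halfT (k : ℕ) : 2 * ∑ j ∈ range k, (2*k).choose j + (2*k).choose k = 4 ^ k := by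
  have h0 : ∑ i ∈ range (2*k+1), (2*k).choose i = 4 ^ k := by
    rw [Nat.sum_range_choose]
    rw [pow_mul]; norm_num
  have hsplit : ∑ i ∈ range ((k+1) + k), (2*k).choose i
      = ∑ i ∈ range (k+1), (2*k).choose i + ∑ i ∈ range k, (2*k).choose (k+1+i) :=
    Finset.sum_range_add _ _ _
  have hrefl : ∑ i ∈ range k, (2*k).choose (k+1+i) = ∑ i ∈ range k, (2*k).choose i := by
    rw [← Finset.sum_range_reflect (fun i => (2*k).choose (k+1+i)) k]
    apply Finset.sum_congr rfl
    intro i hi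
    simp only [mem_range] at hi
    have : k + 1 + (k - 1 - i) = 2*k - i := by omega
    rw [this, Nat.choose_symm (by omega)]
  have : (k+1) + k = 2*k+1 := by omega
  rw [this] at hsplit
  rw [hsplit, hrefl, Finset.sum_range_succ] at h0
  omega

lemma lsum (k : ℕ) : ∑ l ∈ range (k+1), l * (2*k+1).choose l
    = (2*k+1) * ∑ j ∈ range k, (2*k).choose j := by
  rw [Finset.sum_range_succ']
  simp only [Nat.zero_mul, add_zero]
  rw [Finset.mul_sum]
  apply Finset.sum_congr rfl
  intro j _
  rw [mul_comm (j+1), ← Nat.add_one_mul_choose_eq]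

/-- For `m ≥ 1`,
`∑_{l=0}^{m−1} (m−l−1) C(2m−1, l) = (m/2) C(2m−1, m−1) − 2^{2m−3}`. -/
theorem binom_sum_identity (m : ℕ) (hm : 1 ≤ m) :
    ∑ l ∈ Finset.range m, ((m : ℝ) - l - 1) * ((2 * m - 1).choose l : ℝ) =
      (m : ℝ) / 2 * ((2 * m - 1).choose (m - 1) : ℝ) - (2 : ℝ) ^ (2 * (m : ℤ) - 3) := by
  obtain ⟨k, rfl⟩ : ∃ k, m = k + 1 := ⟨m - 1, by omega⟩
  have e1 : 2 * (k+1) - 1 = 2*k+1 := by omega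
  have e2 : k + 1 - 1 = k := by omega
  rw [e1, e2]
  -- zpow
  have hz : (2 : ℝ) ^ (2 * ((k+1 : ℕ) : ℤ) - 3) = (4:ℝ) ^ k / 2 := by
    have : 2 * ((k+1 : ℕ) : ℤ) - 3 = (2*k : ℕ) - 1 := by push_cast; ring
    rw [this, zpow_sub₀ (by norm_num : (2:ℝ) ≠ 0)]
    rw [zpow_natCast, pow_mul]
    norm_num
  rw [hz]
  -- sums
  have hA : ∑ l ∈ range (k+1), ((2*k+1).choose l : ℝ) = 4 ^ k := by
    exact_mod_cast congrArg (Nat.cast : ℕ → ℝ) (Nat.sum_range_choose_halfway k)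
  have hB : ∑ l ∈ range (k+1), (l : ℝ) * ((2*k+1).choose l : ℝ)
      = (2*k+1 : ℝ) * ∑ j ∈ range k, ((2*k).choose j : ℝ) := by
    exact_mod_cast congrArg (Nat.cast : ℕ → ℝ) (lsum k)
  have hT : 2 * ∑ j ∈ range k, ((2*k).choose j : ℝ) + ((2*k).choose k : ℝ) = 4 ^ k := by
    exact_mod_cast congrArg (Nat.cast : ℕ → ℝ) (halfT k)
  have hD : (2*k+1 : ℝ) * ((2*k).choose k : ℝ) = (k+1 : ℝ) * ((2*k+1).choose k : ℝ) := by
    have := Nat.add_one_mul_choose_eq (2*k) k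
    have hsymm : (2*k+1).choose (k+1) = (2*k+1).choose k := by
      have h := Nat.choose_symm (show k ≤ 2*k+1 by omega)
      have : 2*k+1-k = k+1 := by omega
      rw [this] at h
      exact h
    rw [hsymm] at this
    have : ((2*k+1) * (2*k).choose k : ℕ) = ((k+1) * (2*k+1).choose k : ℕ) := by
      simpa [Nat.succ_eq_add_one, mul_comm] using this
    exact_mod_cast congrArg (Nat.cast : ℕ → ℝ) this
  have hLHS : ∑ l ∈ range (k+1), (((k+1 : ℕ) : ℝ) - l - 1) * ((2*k+1).choose l : ℝ)
      = (k : ℝ) * (∑ l ∈ range (k+1), ((2*k+1).choose l : ℝ))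
        - ∑ l ∈ range (k+1), (l : ℝ) * ((2*k+1).choose l : ℝ) := by
    rw [Finset.mul_sum, ← Finset.sum_sub_distrib]
    apply Finset.sum_congr rfl
    intro l _
    push_cast
    ring
  rw [hLHS, hA, hB]
  push_cast at hT hD ⊢
  linear_combination (-(2*(k:ℝ)+1)/2) * hT + (1/2) * hD
end
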